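/- arXiv:2510.06301 — 6 statements merged into one kernel-verified Lean document; each statement's English description precedes it below -/
import Mathlib

section
/- Let n be a positive integer and let (A₁,…,A_k) and (B₁,…,B_{n-k+1}) be subpartitions of [n] = {1,…,n}, i.e., pairwise disjoint nonempty subsets. Then there exist a nonempty subset {i₁,…,i_t} of {1,…,k} and a nonempty subset {j₁,…,j_s} of {1,…,n-k+1} such that A_{i₁}∪⋯∪A_{i_t} = B_{j₁}∪⋯∪B_{j_s}. -/
open Finset

theorem pigeonhole_subpartitions (n k : ℕ) (hk : 1 ≤ k) (hkn : k ≤ n)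
    (A : Fin k → Finset (Fin n)) (B : Fin (n - k + 1) → Finset (Fin n))
    (hAne : ∀ i, (A i).Nonempty) (hAdisj : ∀ i j, i ≠ j → Disjoint (A i) (A j))
    (hBne : ∀ j, (B j).Nonempty) (hBdisj : ∀ i j, i ≠ j → Disjoint (B i) (B j)) :
    ∃ (I : Finset (Fin k)) (J : Finset (Fin (n - k + 1))), I.Nonempty ∧ J.Nonempty ∧
      I.biUnion A = J.biUnion B := by
  let v : Fin k ⊕ Fin (n - k + 1) → (Fin n → ℚ) := fun t => match t with
    | .inl i => fun x => if x ∈ A i then (1 : ℚ) else 0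
    | .inr j => fun x => if x ∈ B j then (-1 : ℚ) else 0
  have hcard : Module.finrank ℚ (Fin n → ℚ) < Fintype.card (Fin k ⊕ Fin (n - k + 1)) := by
    simp only [Module.finrank_fintype_fun_eq_card, Fintype.card_sum, Fintype.card_fin]
    omega
  have hnli : ¬ LinearIndependent ℚ v := fun h =>
    absurd h.fintype_card_le_finrank (not_le.2 hcard)
  obtain ⟨g, hg0, t0, ht0⟩ := Fintype.not_linearIndependent_iff.1 hnli
  set a : Fin k → ℚ := fun i => g (.inl i) with ha
  set b : Fin (n - k + 1) → ℚ := fun j => g (.inr j) with hb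
  set fa : Fin n → ℚ := fun x => ∑ i, a i * (if x ∈ A i then (1:ℚ) else 0) with hfa
  set fb : Fin n → ℚ := fun x => ∑ j, b j * (if x ∈ B j then (1:ℚ) else 0) with hfb
  have hkey : ∀ x, fa x = fb x := by
    intro x
    have := congrFun hg0 x
    simp only [Fintype.sum_sum_type, Finset.sum_apply, Pi.smul_apply, smul_eq_mul,
      Pi.zero_apply, v] at this
    have h2 : fa x + ∑ j, b j * (if x ∈ B j then (-1:ℚ) else 0) = 0 := this
    have h3 : ∑ j, b j * (if x ∈ B j then (-1:ℚ) else 0) = - fb x := by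
      show _ = -(∑ j, b j * (if x ∈ B j then (1:ℚ) else 0))
      rw [← Finset.sum_neg_distrib]
      apply Finset.sum_congr rfl
      intro j _
      by_cases h : x ∈ B j <;> simp [h]
    rw [h3] at h2
    linarith
  -- fa at a point of A i equals a i
  have hfaA : ∀ x i, x ∈ A i → fa x = a i := by
    intro x i hx
    show (∑ i', a i' * (if x ∈ A i' then (1:ℚ) else 0)) = a i
    rw [Finset.sum_eq_single i]
    · simp [hx]
    · intro i' _ hne
      have : x ∉ A i' := Finset.disjoint_left.mp (hAdisj i i' (Ne.symm hne)) hx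
      simp [this]
    · simp
  have hfbB : ∀ x j, x ∈ B j → fb x = b j := by
    intro x j hx
    show (∑ j', b j' * (if x ∈ B j' then (1:ℚ) else 0)) = b j
    rw [Finset.sum_eq_single j]
    · simp [hx]
    · intro j' _ hne
      have : x ∉ B j' := Finset.disjoint_left.mp (hBdisj j j' (Ne.symm hne)) hx
      simp [this]
    · simp
  have hfaA0 : ∀ x, (∀ i, x ∉ A i) → fa x = 0 := by
    intro x hx
    show (∑ i, a i * (if x ∈ A i then (1:ℚ) else 0)) = 0
    apply Finset.sum_eq_zero
    intro i _
    simp [hx i]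
  have hfbB0 : ∀ x, (∀ j, x ∉ B j) → fb x = 0 := by
    intro x hx
    show (∑ j, b j * (if x ∈ B j then (1:ℚ) else 0)) = 0
    apply Finset.sum_eq_zero
    intro j _
    simp [hx j]
  -- the nonzero coefficient value
  obtain ⟨c, hc0, hcmem⟩ : ∃ c : ℚ, c ≠ 0 ∧ ((∃ i, a i = c) ∨ (∃ j, b j = c)) := by
    cases t0 with
    | inl i => exact ⟨a i, ht0, Or.inl ⟨i, rfl⟩⟩
    | inr j => exact ⟨b j, ht0, Or.inr ⟨j, rfl⟩⟩
  set I : Finset (Fin k) := univ.filter (fun i => a i = c) with hI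
  set J : Finset (Fin (n - k + 1)) := univ.filter (fun j => b j = c) with hJ
  have hmemA : ∀ x, x ∈ I.biUnion A ↔ fa x = c := by
    intro x
    constructor
    · intro hx
      obtain ⟨i, hi, hxi⟩ := Finset.mem_biUnion.mp hx
      rw [hfaA x i hxi]
      exact (Finset.mem_filter.mp hi).2
    · intro hx
      by_cases h : ∃ i, x ∈ A i
      · obtain ⟨i, hi⟩ := h
        refine Finset.mem_biUnion.mpr ⟨i, Finset.mem_filter.mpr ⟨mem_univ _, ?_⟩, hi⟩
        rw [← hfaA x i hi]; exact hx
      · push_neg at h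
        exact absurd (hfaA0 x h ▸ hx) (Ne.symm hc0)
  have hmemB : ∀ x, x ∈ J.biUnion B ↔ fb x = c := by
    intro x
    constructor
    · intro hx
      obtain ⟨j, hj, hxj⟩ := Finset.mem_biUnion.mp hx
      rw [hfbB x j hxj]
      exact (Finset.mem_filter.mp hj).2
    · intro hx
      by_cases h : ∃ j, x ∈ B j
      · obtain ⟨j, hj⟩ := h
        refine Finset.mem_biUnion.mpr ⟨j, Finset.mem_filter.mpr ⟨mem_univ _, ?_⟩, hj⟩
        rw [← hfbB x j hj]; exact hx
      · push_neg at h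
        exact absurd (hfbB0 x h ▸ hx) (Ne.symm hc0)
  have hEq : I.biUnion A = J.biUnion B := by
    ext x
    rw [hmemA, hmemB, hkey]
  refine ⟨I, J, ?_, ?_, hEq⟩
  · -- I nonempty
    rcases hcmem with ⟨i, hi⟩ | ⟨j, hj⟩
    · exact ⟨i, Finset.mem_filter.mpr ⟨mem_univ _, hi⟩⟩
    · obtain ⟨x, hx⟩ := hBne j
      have hxJ : x ∈ J.biUnion B :=
        Finset.mem_biUnion.mpr ⟨j, Finset.mem_filter.mpr ⟨mem_univ _, hj⟩, hx⟩
      rw [← hEq] at hxJ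
      obtain ⟨i, hi, _⟩ := Finset.mem_biUnion.mp hxJ
      exact ⟨i, hi⟩
  · -- J nonempty
    rcases hcmem with ⟨i, hi⟩ | ⟨j, hj⟩
    · obtain ⟨x, hx⟩ := hAne i
      have hxI : x ∈ I.biUnion A :=
        Finset.mem_biUnion.mpr ⟨i, Finset.mem_filter.mpr ⟨mem_univ _, hi⟩, hx⟩
      rw [hEq] at hxI
      obtain ⟨j, hj, _⟩ := Finset.mem_biUnion.mp hxI
      exact ⟨j, hj⟩
    · exact ⟨j, Finset.mem_filter.mpr ⟨mem_univ _, hj⟩⟩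
end

section
/- For any weighted graph G=(V,E,μ,w), the Cheeger k-constant satisfies h_k(G) = min over subpartitions (A₁,…,A_k) of V of the max over B in 𝒰(A₁,…,A_k) of φ(B), where 𝒰(A₁,…,A_k) is the family of all unions of nonempty subcollections of {A₁,…,A_k}. In other words, replacing the maximum over the parts A_i by the maximum over all unions of parts does not change the minimax value. -/
open Finset

variable {V : Type*}

noncomputable def bdryW [Fintype V] [DecidableEq V] (G : SimpleGraph V) [DecidableRel G.Adj]
    (w : Sym2 V → ℝ) (A : Finset V) : ℝ :=
  ∑ u ∈ A, ∑ v ∈ Aᶜ, if G.Adj u v then w s(u, v) else 0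

noncomputable def vol [Fintype V] (μ : V → ℝ) (A : Finset V) : ℝ := ∑ v ∈ A, μ v

noncomputable def phi [Fintype V] [DecidableEq V] (G : SimpleGraph V) [DecidableRel G.Adj]
    (μ : V → ℝ) (w : Sym2 V → ℝ) (A : Finset V) : ℝ := bdryW G w A / vol μ A

/-- A subpartition: a tuple of pairwise disjoint nonempty subsets of the vertex set. -/
def IsSubpartition {k : ℕ} (A : Fin k → Finset V) : Prop :=
  (∀ i, (A i).Nonempty) ∧ ∀ i j, i ≠ j → Disjoint (A i) (A j)

/-- The Cheeger k-constant: min over subpartitions with k parts of the max expansion. -/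
noncomputable def hkConst [Fintype V] [DecidableEq V] (G : SimpleGraph V) [DecidableRel G.Adj]
    (μ : V → ℝ) (w : Sym2 V → ℝ) (k : ℕ) : ℝ :=
  sInf {r | ∃ A : Fin k → Finset V, IsSubpartition A ∧
    r = sSup {s | ∃ i, s = phi G μ w (A i)}}

/-- Variant of the Cheeger k-constant where the maximum runs over all unions of parts. -/
noncomputable def hkUnion [Fintype V] [DecidableEq V] (G : SimpleGraph V) [DecidableRel G.Adj]
    (μ : V → ℝ) (w : Sym2 V → ℝ) (k : ℕ) : ℝ :=
  sInf {r | ∃ A : Fin k → Finset V, IsSubpartition A ∧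
    r = sSup {s | ∃ I : Finset (Fin k), I.Nonempty ∧ s = phi G μ w (I.biUnion A)}}

/-- The k-th max-min Cheeger constant ℓ_k. -/
noncomputable def ellk [Fintype V] [DecidableEq V] (G : SimpleGraph V) [DecidableRel G.Adj]
    (μ : V → ℝ) (w : Sym2 V → ℝ) (k : ℕ) : ℝ :=
  sSup {r | ∃ A : Fin (Fintype.card V - k + 1) → Finset V, IsSubpartition A ∧
    r = sInf {s | ∃ I : Finset (Fin (Fintype.card V - k + 1)), I.Nonempty ∧
      s = phi G μ w (I.biUnion A)}}

/-- The Cheeger constant of a subset A: min of φ over nonempty subsets of A. -/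
noncomputable def cheegerConst [Fintype V] [DecidableEq V] (G : SimpleGraph V) [DecidableRel G.Adj]
    (μ : V → ℝ) (w : Sym2 V → ℝ) (A : Finset V) : ℝ :=
  sInf {r | ∃ B : Finset V, B ⊆ A ∧ B.Nonempty ∧ r = phi G μ w B}

/-- The k-th Dirichlet Cheeger constant ℓ̲_k. -/
noncomputable def ellUnder [Fintype V] [DecidableEq V] (G : SimpleGraph V) [DecidableRel G.Adj]
    (μ : V → ℝ) (w : Sym2 V → ℝ) (k : ℕ) : ℝ :=
  sSup {r | ∃ A : Finset V, A.card = Fintype.card V - k + 1 ∧ r = cheegerConst G μ w A}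


lemma vol_pos [Fintype V] (μ : V → ℝ) (hμ : ∀ v, 0 < μ v) {A : Finset V} (hA : A.Nonempty) :
    0 < vol μ A := Finset.sum_pos (fun v _ => hμ v) hA

lemma bdryW_ite_nonneg [Fintype V] [DecidableEq V] (G : SimpleGraph V) [DecidableRel G.Adj]
    (w : Sym2 V → ℝ) (hw : ∀ e ∈ G.edgeSet, 0 < w e) (u v : V) :
    0 ≤ if G.Adj u v then w s(u, v) else 0 := by
  split_ifs with h
  · exact (hw _ h).le
  · exact le_refl 0

lemma phi_biUnion_le [Fintype V] [DecidableEq V] (G : SimpleGraph V) [DecidableRel G.Adj]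
    (μ : V → ℝ) (w : Sym2 V → ℝ) (hμ : ∀ v, 0 < μ v) (hw : ∀ e ∈ G.edgeSet, 0 < w e)
    {k : ℕ} (A : Fin k → Finset V) (hA : IsSubpartition A)
    (I : Finset (Fin k)) (hI : I.Nonempty) :
    phi G μ w (I.biUnion A) ≤ sSup {s | ∃ i, s = phi G μ w (A i)} := by
  set M := sSup {s | ∃ i, s = phi G μ w (A i)} with hM
  have hfin : ({s | ∃ i, s = phi G μ w (A i)}).Finite := by
    have : {s | ∃ i, s = phi G μ w (A i)} = Set.range (fun i => phi G μ w (A i)) := by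
      ext s; simp [eq_comm]
    rw [this]; exact Set.finite_range _
  have hle : ∀ i, phi G μ w (A i) ≤ M :=
    fun i => le_csSup hfin.bddAbove ⟨i, rfl⟩
  have hdisj : Set.PairwiseDisjoint (↑I) A := fun i _ j _ hij => hA.2 i j hij
  have hvol : vol μ (I.biUnion A) = ∑ i ∈ I, vol μ (A i) := Finset.sum_biUnion hdisj
  have hvolpos : 0 < vol μ (I.biUnion A) := by
    refine vol_pos μ hμ ?_
    obtain ⟨i, hi⟩ := hI
    obtain ⟨v, hv⟩ := hA.1 i
    exact ⟨v, Finset.mem_biUnion.mpr ⟨i, hi, hv⟩⟩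
  have hbd : bdryW G w (I.biUnion A) ≤ ∑ i ∈ I, bdryW G w (A i) := by
    unfold bdryW
    rw [Finset.sum_biUnion hdisj]
    refine Finset.sum_le_sum (fun i hi => Finset.sum_le_sum (fun u hu => ?_))
    refine Finset.sum_le_sum_of_subset_of_nonneg ?_
      (fun v _ _ => bdryW_ite_nonneg G w hw u v)
    apply Finset.compl_subset_compl.mpr
    exact fun v hv => Finset.mem_biUnion.mpr ⟨i, hi, hv⟩
  have hsum : ∑ i ∈ I, bdryW G w (A i) ≤ M * vol μ (I.biUnion A) := by
    rw [hvol, Finset.mul_sum]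
    refine Finset.sum_le_sum (fun i _ => ?_)
    have hv := vol_pos μ hμ (hA.1 i)
    have := hle i
    rw [phi, div_le_iff₀ hv] at this
    linarith
  rw [phi, div_le_iff₀ hvolpos]
  linarith

lemma sSup_union_eq [Fintype V] [DecidableEq V] (G : SimpleGraph V) [DecidableRel G.Adj]
    (μ : V → ℝ) (w : Sym2 V → ℝ) (hμ : ∀ v, 0 < μ v) (hw : ∀ e ∈ G.edgeSet, 0 < w e)
    {k : ℕ} (hk : 0 < k) (A : Fin k → Finset V) (hA : IsSubpartition A) :
    sSup {s | ∃ i, s = phi G μ w (A i)}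
      = sSup {s | ∃ I : Finset (Fin k), I.Nonempty ∧ s = phi G μ w (I.biUnion A)} := by
  have i0 : Fin k := ⟨0, hk⟩
  have hfinU : ({s | ∃ I : Finset (Fin k), I.Nonempty ∧ s = phi G μ w (I.biUnion A)}).Finite := by
    apply Set.Finite.subset (Set.finite_range (fun I : Finset (Fin k) => phi G μ w (I.biUnion A)))
    rintro s ⟨I, _, rfl⟩; exact ⟨I, rfl⟩
  apply le_antisymm
  · refine csSup_le ⟨_, ⟨i0, rfl⟩⟩ ?_
    rintro s ⟨i, rfl⟩
    refine le_csSup hfinU.bddAbove ⟨{i}, Finset.singleton_nonempty i, ?_⟩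
    rw [Finset.singleton_biUnion]
  · refine csSup_le ⟨_, ⟨{i0}, Finset.singleton_nonempty i0, rfl⟩⟩ ?_
    rintro s ⟨I, hI, rfl⟩
    exact phi_biUnion_le G μ w hμ hw A hA I hI


theorem hk_eq_hkUnion [Fintype V] [DecidableEq V] (G : SimpleGraph V) [DecidableRel G.Adj]
    (μ : V → ℝ) (w : Sym2 V → ℝ) (hμ : ∀ v, 0 < μ v) (hw : ∀ e ∈ G.edgeSet, 0 < w e)
    (k : ℕ) (hk : 1 ≤ k) (hkn : k ≤ Fintype.card V) :
    hkConst G μ w k = hkUnion G μ w k := by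
  unfold hkConst hkUnion
  congr 1
  ext r
  constructor
  · rintro ⟨A, hA, rfl⟩
    exact ⟨A, hA, sSup_union_eq G μ w hμ hw hk A hA⟩
  · rintro ⟨A, hA, rfl⟩
    exact ⟨A, hA, (sSup_union_eq G μ w hμ hw hk A hA).symm⟩
end

section
/- For any weighted graph G̃ with n vertices and any 1 ≤ k ≤ n, the inequality h_k(G̃) ≥ ℓ_k(G̃) holds, where h_k is the Cheeger k-constant (min over subpartitions with k parts of the max of φ over unions of parts) and ℓ_k(G̃) = max over subpartitions (A₁,…,A_{n-k+1}) of V of the min over B ∈ 𝒰(A₁,…,A_{n-k+1}) of φ(B). -/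
open Finset

variable {V : Type*}

lemma exists_common_union {V : Type*} [DecidableEq V] :
    ∀ (N : ℕ) {m k : ℕ} (A : Fin m → Finset V) (B : Fin k → Finset V)
      (P : Finset (Fin m)) (Q : Finset (Fin k)) (S : Finset V),
      P.card + Q.card = N →
      (∀ i ∈ P, (A i).Nonempty) → (∀ j ∈ Q, (B j).Nonempty) →
      (∀ i ∈ P, A i ⊆ S) → (∀ j ∈ Q, B j ⊆ S) →
      (∀ i ∈ P, ∀ i' ∈ P, i ≠ i' → Disjoint (A i) (A i')) →
      (∀ j ∈ Q, ∀ j' ∈ Q, j ≠ j' → Disjoint (B j) (B j')) →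
      S.card + 1 ≤ P.card + Q.card →
      ∃ I, I ⊆ P ∧ I.Nonempty ∧ ∃ J, J ⊆ Q ∧ J.Nonempty ∧ I.biUnion A = J.biUnion B := by
  intro N
  induction N using Nat.strong_induction_on with
  | _ N ih =>
    intro m k A B P Q S hN hAne hBne hAS hBS hAd hBd hcard
    by_cases h1 : ∀ i ∈ P, A i ⊆ Q.biUnion B
    · by_cases h2 : ∀ j ∈ Q, B j ⊆ P.biUnion A
      · have hQP : Q.biUnion B ⊆ P.biUnion A := biUnion_subset.2 h2
        have hPQ : P.biUnion A ⊆ Q.biUnion B := biUnion_subset.2 h1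
        have hPne : P.Nonempty := by
          rcases P.eq_empty_or_nonempty with hP | hP
          · exfalso
            have hQe : Q = ∅ := by
              by_contra hQ
              obtain ⟨j, hj⟩ := nonempty_iff_ne_empty.2 hQ
              obtain ⟨x, hx⟩ := hBne j hj
              have := h2 j hj hx
              simp [hP] at this
            rw [hP, hQe] at hcard; simp at hcard
          · exact hP
        have hQne : Q.Nonempty := by
          rcases Q.eq_empty_or_nonempty with hQ | hQ
          · exfalso
            obtain ⟨i, hi⟩ := hPne
            obtain ⟨x, hx⟩ := hAne i hi
            have := h1 i hi hx
            simp [hQ] at this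
          · exact hQ
        exact ⟨P, Subset.rfl, hPne, Q, Subset.rfl, hQne, le_antisymm hPQ hQP⟩
      · push_neg at h2
        obtain ⟨j, hjQ, hj⟩ := h2
        have hxne : (B j \ P.biUnion A).Nonempty := sdiff_nonempty.2 hj
        set T := B j \ P.biUnion A with hT
        have hTS : T ⊆ S := (sdiff_subset).trans (hBS j hjQ)
        have hSS : S \ T ⊂ S := sdiff_ssubset hTS hxne
        have hScard : (S \ T).card < S.card := card_lt_card hSS
        have hQcard : (Q.erase j).card = Q.card - 1 := card_erase_of_mem hjQ
        have hQpos : 1 ≤ Q.card := card_pos.2 ⟨j, hjQ⟩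
        have hmeas : P.card + (Q.erase j).card < N := by omega
        obtain ⟨I, hIP, hIne, J, hJQ, hJne, heq⟩ :=
          ih _ hmeas A B P (Q.erase j) (S \ T) rfl hAne
            (fun j' hj' => hBne j' (mem_of_mem_erase hj'))
            (fun i hi x hx => by
              refine mem_sdiff.2 ⟨hAS i hi hx, ?_⟩
              rw [hT]
              simp only [mem_sdiff, not_and, not_not]
              intro _
              exact mem_biUnion.2 ⟨i, hi, hx⟩)
            (fun j' hj' x hx => by
              refine mem_sdiff.2 ⟨hBS j' (mem_of_mem_erase hj') hx, ?_⟩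
              rw [hT]
              simp only [mem_sdiff, not_and, not_not]
              intro hxB
              exact (disjoint_left.1
                (hBd j' (mem_of_mem_erase hj') j hjQ (ne_of_mem_erase hj')) hx hxB).elim)
            hAd
            (fun a ha b hb hab => hBd a (mem_of_mem_erase ha) b (mem_of_mem_erase hb) hab)
            (by omega)
        exact ⟨I, hIP, hIne, J, hJQ.trans (erase_subset _ _), hJne, heq⟩
    · push_neg at h1
      obtain ⟨i, hiP, hi⟩ := h1
      have hxne : (A i \ Q.biUnion B).Nonempty := sdiff_nonempty.2 hi
      set T := A i \ Q.biUnion B with hT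
      have hTS : T ⊆ S := (sdiff_subset).trans (hAS i hiP)
      have hSS : S \ T ⊂ S := sdiff_ssubset hTS hxne
      have hScard : (S \ T).card < S.card := card_lt_card hSS
      have hPcard : (P.erase i).card = P.card - 1 := card_erase_of_mem hiP
      have hPpos : 1 ≤ P.card := card_pos.2 ⟨i, hiP⟩
      have hmeas : (P.erase i).card + Q.card < N := by omega
      obtain ⟨I, hIP, hIne, J, hJQ, hJne, heq⟩ :=
        ih _ hmeas A B (P.erase i) Q (S \ T) rfl
          (fun i' hi' => hAne i' (mem_of_mem_erase hi')) hBne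
          (fun i' hi' x hx => by
            refine mem_sdiff.2 ⟨hAS i' (mem_of_mem_erase hi') hx, ?_⟩
            rw [hT]
            simp only [mem_sdiff, not_and, not_not]
            intro hxA
            exact (disjoint_left.1
              (hAd i' (mem_of_mem_erase hi') i hiP (ne_of_mem_erase hi')) hx hxA).elim)
          (fun j hj x hx => by
            refine mem_sdiff.2 ⟨hBS j hj hx, ?_⟩
            rw [hT]
            simp only [mem_sdiff, not_and, not_not]
            intro _
            exact mem_biUnion.2 ⟨j, hj, hx⟩)
          (fun a ha b hb hab => hAd a (mem_of_mem_erase ha) b (mem_of_mem_erase hb) hab)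
          hBd
          (by omega)
      exact ⟨I, hIP.trans (erase_subset _ _), hIne, J, hJQ, hJne, heq⟩

lemma exists_subpartition [Fintype V] [DecidableEq V] (k : ℕ) (hkn : k ≤ Fintype.card V) :
    ∃ B : Fin k → Finset V, IsSubpartition B := by
  have : Nonempty (Fin k ↪ V) := by
    apply Function.Embedding.nonempty_of_card_le
    simpa using hkn
  obtain ⟨e⟩ := this
  refine ⟨fun i => {e i}, fun i => singleton_nonempty _, fun i j hij => ?_⟩
  simp only [Finset.disjoint_singleton, ne_eq]
  exact e.injective.ne hij

theorem hk_ge_ellk [Fintype V] [DecidableEq V] (G : SimpleGraph V) [DecidableRel G.Adj]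
    (μ : V → ℝ) (w : Sym2 V → ℝ) (hμ : ∀ v, 0 < μ v) (hw : ∀ e ∈ G.edgeSet, 0 < w e)
    (k : ℕ) (hk : 1 ≤ k) (hkn : k ≤ Fintype.card V) :
    ellk G μ w k ≤ hkUnion G μ w k := by
  classical
  set n := Fintype.card V with hn
  set m := n - k + 1 with hm
  -- the pairwise bound
  have pair : ∀ (A : Fin m → Finset V), IsSubpartition A →
      ∀ (B : Fin k → Finset V), IsSubpartition B →
      sInf {s | ∃ I : Finset (Fin m), I.Nonempty ∧ s = phi G μ w (I.biUnion A)} ≤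
      sSup {s | ∃ J : Finset (Fin k), J.Nonempty ∧ s = phi G μ w (J.biUnion B)} := by
    intro A hA B hB
    obtain ⟨I, _, hIne, J, _, hJne, heq⟩ :=
      exists_common_union ((univ : Finset (Fin m)).card + (univ : Finset (Fin k)).card)
        A B univ univ univ rfl (fun i _ => hA.1 i) (fun j _ => hB.1 j)
        (fun i _ => subset_univ _) (fun j _ => subset_univ _)
        (fun i _ i' _ h => hA.2 i i' h) (fun j _ j' _ h => hB.2 j j' h)
        (by simp only [card_univ, Fintype.card_fin]; omega)
    have hfinA : ({s | ∃ I : Finset (Fin m), I.Nonempty ∧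
        s = phi G μ w (I.biUnion A)} : Set ℝ).Finite := by
      apply Set.Finite.subset (Set.finite_range (fun I : Finset (Fin m) =>
        phi G μ w (I.biUnion A)))
      rintro s ⟨I, _, rfl⟩
      exact ⟨I, rfl⟩
    have hfinB : ({s | ∃ J : Finset (Fin k), J.Nonempty ∧
        s = phi G μ w (J.biUnion B)} : Set ℝ).Finite := by
      apply Set.Finite.subset (Set.finite_range (fun J : Finset (Fin k) =>
        phi G μ w (J.biUnion B)))
      rintro s ⟨J, _, rfl⟩
      exact ⟨J, rfl⟩
    calc sInf {s | ∃ I : Finset (Fin m), I.Nonempty ∧ s = phi G μ w (I.biUnion A)} ≤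
        phi G μ w (I.biUnion A) := csInf_le hfinA.bddBelow ⟨I, hIne, rfl⟩
      _ = phi G μ w (J.biUnion B) := by rw [heq]
      _ ≤ sSup {s | ∃ J : Finset (Fin k), J.Nonempty ∧ s = phi G μ w (J.biUnion B)} :=
        le_csSup hfinB.bddAbove ⟨J, hJne, rfl⟩
  obtain ⟨B0, hB0⟩ := exists_subpartition (V := V) k hkn
  obtain ⟨A0, hA0⟩ := exists_subpartition (V := V) m (by omega)
  have hHne : ({r | ∃ B : Fin k → Finset V, IsSubpartition B ∧
      r = sSup {s | ∃ J : Finset (Fin k), J.Nonempty ∧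
        s = phi G μ w (J.biUnion B)}} : Set ℝ).Nonempty := ⟨_, B0, hB0, rfl⟩
  have hEne : ({r | ∃ A : Fin m → Finset V, IsSubpartition A ∧
      r = sInf {s | ∃ I : Finset (Fin m), I.Nonempty ∧
        s = phi G μ w (I.biUnion A)}} : Set ℝ).Nonempty := ⟨_, A0, hA0, rfl⟩
  rw [ellk, hkUnion]
  apply csSup_le hEne
  rintro r ⟨A, hA, rfl⟩
  apply le_csInf hHne
  rintro r' ⟨B, hB, rfl⟩
  exact pair A hA B hB
end

section
/- Let G=(V,E,μ,w) be a weighted graph with |V|=n and let (A₁,…,A_m) be a subpartition of V. For any nonzero vector x in the linear span of the indicator vectors 𝟙_{A₁},…,𝟙_{A_m}, there exists a set B ∈ 𝒰(A₁,…,A_m) (a nonempty union of some of the A_i's) such that Φ₁(x) ≥ φ(B), where Φ₁(x) = (Σ_{{u,v}∈E} w_{uv}|x_u - x_v|)/(Σ_{v∈V} μ_v |x_v|). -/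
open Finset

variable {V : Type*}

/-- The L¹-Rayleigh quotient Φ₁. -/
noncomputable def Phi1 [Fintype V] [DecidableEq V] (G : SimpleGraph V) [DecidableRel G.Adj]
    (μ : V → ℝ) (w : Sym2 V → ℝ) (x : V → ℝ) : ℝ :=
  ((∑ u, ∑ v, if G.Adj u v then w s(u, v) * |x u - x v| else 0) / 2) / (∑ v, μ v * |x v|)

/-- The indicator vector of a finite set of vertices. -/
def indVec [DecidableEq V] (A : Finset V) : V → ℝ := fun v => if v ∈ A then 1 else 0

noncomputable def Nsum [Fintype V] (G : SimpleGraph V) [DecidableRel G.Adj]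
    (w : Sym2 V → ℝ) (y : V → ℝ) : ℝ :=
  ∑ u, ∑ v, if G.Adj u v then w s(u, v) * |y u - y v| else 0

section lems
variable [Fintype V] [DecidableEq V] (G : SimpleGraph V) [DecidableRel G.Adj]
  (μ : V → ℝ) (w : Sym2 V → ℝ)

lemma Phi1_eq (y : V → ℝ) : Phi1 G μ w y = (Nsum G w y / 2) / (∑ v, μ v * |y v|) := rfl

lemma block_sum (g : V → V → ℝ) (B : Finset V) :
    (∑ u, ∑ v, if u ∈ B ∧ v ∈ Bᶜ then g u v else 0) = ∑ u ∈ B, ∑ v ∈ Bᶜ, g u v := by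
  have : ∀ u : V, (∑ v, if u ∈ B ∧ v ∈ Bᶜ then g u v else 0)
      = if u ∈ B then ∑ v ∈ Bᶜ, g u v else 0 := by
    intro u
    by_cases hu : u ∈ B
    · simp only [hu, true_and, if_true]
      rw [Finset.sum_ite_mem, Finset.univ_inter]
    · simp [hu]
  simp_rw [this]
  rw [Finset.sum_ite_mem, Finset.univ_inter]

lemma Nsum_indVec (B : Finset V) : Nsum G w (indVec B) = 2 * bdryW G w B := by
  classical
  have key : ∀ u v : V, (if G.Adj u v then w s(u, v) * |indVec B u - indVec B v| else 0)
      = (if u ∈ B ∧ v ∈ Bᶜ then (if G.Adj u v then w s(u,v) else 0) else 0)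
      + (if v ∈ B ∧ u ∈ Bᶜ then (if G.Adj u v then w s(u,v) else 0) else 0) := by
    intro u v
    by_cases h : G.Adj u v <;> simp only [indVec, h, if_true, if_false, mem_compl]
    · by_cases hu : u ∈ B <;> by_cases hv : v ∈ B <;> simp [hu, hv]
    · simp
  unfold Nsum
  rw [show (2 : ℝ) * bdryW G w B = bdryW G w B + bdryW G w B by ring]
  simp_rw [key, Finset.sum_add_distrib]
  congr 1
  · rw [bdryW, block_sum]
  · rw [bdryW, Finset.sum_comm]
    rw [block_sum (fun v u => if G.Adj u v then w s(u,v) else 0) B]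
    apply Finset.sum_congr rfl; intro v hv
    apply Finset.sum_congr rfl; intro u hu
    by_cases h : G.Adj u v
    · rw [if_pos h, if_pos (h.symm), Sym2.eq_swap]
    · rw [if_neg h, if_neg (fun h' => h h'.symm)]

lemma Nsum_split (y z y' : V → ℝ) (t : ℝ)
    (h : ∀ u v, |y u - y v| = t * |z u - z v| + |y' u - y' v|) :
    Nsum G w y = t * Nsum G w z + Nsum G w y' := by
  unfold Nsum
  rw [Finset.mul_sum, ← Finset.sum_add_distrib]
  apply Finset.sum_congr rfl; intro u _
  rw [Finset.mul_sum, ← Finset.sum_add_distrib]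
  apply Finset.sum_congr rfl; intro v _
  by_cases hadj : G.Adj u v
  · simp only [hadj, if_true, h u v]; ring
  · simp [hadj]

omit [DecidableEq V] in
lemma Dsum_pos (hμ : ∀ v, 0 < μ v) (y : V → ℝ) (hy0 : y ≠ 0) :
    0 < ∑ v, μ v * |y v| := by
  obtain ⟨v, hv⟩ : ∃ v, y v ≠ 0 := by
    by_contra h; push_neg at h; exact hy0 (funext h)
  apply Finset.sum_pos' (fun u _ => mul_nonneg (hμ u).le (abs_nonneg _))
  exact ⟨v, Finset.mem_univ v, mul_pos (hμ v) (abs_pos.mpr hv)⟩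

omit [DecidableEq V] [DecidableRel G.Adj] in
lemma mediant (p q r s : ℝ) (hr : 0 < r) (hs : 0 < s) :
    min (p / r) (q / s) ≤ (p + q) / (r + s) := by
  rw [le_div_iff₀ (by linarith)]
  have h1 : min (p / r) (q / s) * r ≤ p :=
    (le_div_iff₀ hr).mp (min_le_left _ _)
  have h2 : min (p / r) (q / s) * s ≤ q :=
    (le_div_iff₀ hs).mp (min_le_right _ _)
  nlinarith

variable {m : ℕ} (A : Fin m → Finset V)

omit [Fintype V] in
lemma rep_eval (hdisj : ∀ i j, i ≠ j → Disjoint (A i) (A j)) [Fintype (Fin m)]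
    (y : V → ℝ) (c : Fin m → ℝ) (hyc : ∀ v, y v = ∑ i, c i * indVec (A i) v)
    {i : Fin m} {v : V} (hv : v ∈ A i) : y v = c i := by
  rw [hyc v]
  rw [Finset.sum_eq_single i]
  · simp [indVec, hv]
  · intro j _ hj
    have : v ∉ A j := fun h => Finset.disjoint_left.mp (hdisj j i hj) h hv
    simp [indVec, this]
  · simp

omit [Fintype V] in
lemma rep_eval0 [Fintype (Fin m)]
    (y : V → ℝ) (c : Fin m → ℝ) (hyc : ∀ v, y v = ∑ i, c i * indVec (A i) v)
    {v : V} (hv : ∀ i, v ∉ A i) : y v = 0 := by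
  rw [hyc v]
  apply Finset.sum_eq_zero
  intro i _
  simp [indVec, hv i]

omit [Fintype V] in
lemma rep_of (hdisj : ∀ i j, i ≠ j → Disjoint (A i) (A j)) [Fintype (Fin m)]
    (y : V → ℝ) (c : Fin m → ℝ)
    (h1 : ∀ i, ∀ v ∈ A i, y v = c i) (h2 : ∀ v, (∀ i, v ∉ A i) → y v = 0) :
    ∀ v, y v = ∑ i, c i * indVec (A i) v := by
  intro v
  by_cases hv : ∃ i, v ∈ A i
  · obtain ⟨i, hi⟩ := hv
    rw [h1 i v hi, Finset.sum_eq_single i]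
    · simp [indVec, hi]
    · intro j _ hj
      have : v ∉ A j := fun h => Finset.disjoint_left.mp (hdisj j i hj) h hi
      simp [indVec, this]
    · simp
  · push_neg at hv
    rw [h2 v hv]
    exact (Finset.sum_eq_zero (fun i _ => by simp [indVec, hv i])).symm

end lems

lemma aux_selection [Fintype V] [DecidableEq V] (G : SimpleGraph V) [DecidableRel G.Adj]
    (μ : V → ℝ) (w : Sym2 V → ℝ) (hμ : ∀ v, 0 < μ v)
    {m : ℕ} (A : Fin m → Finset V)
    (hdisj : ∀ i j, i ≠ j → Disjoint (A i) (A j)) :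
    ∀ k : ℕ, ∀ y : V → ℝ, ∀ c : Fin m → ℝ,
      (∀ v, y v = ∑ i, c i * indVec (A i) v) → (∀ v, 0 ≤ y v) → y ≠ 0 →
      ((Finset.image y Finset.univ).filter (fun a => 0 < a)).card ≤ k →
      ∃ I : Finset (Fin m), I.Nonempty ∧ phi G μ w (I.biUnion A) ≤ Phi1 G μ w y := by
  intro k
  induction k with
  | zero =>
    intro y c hyc hy0 hyne hcard
    exfalso
    obtain ⟨v, hv⟩ : ∃ v, y v ≠ 0 := by
      by_contra h; push_neg at h; exact hyne (funext h)
    have hvpos : 0 < y v := (hy0 v).lt_of_ne (Ne.symm hv)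
    have : y v ∈ (Finset.image y Finset.univ).filter (fun a => 0 < a) :=
      Finset.mem_filter.mpr ⟨Finset.mem_image_of_mem y (Finset.mem_univ v), hvpos⟩
    have := Finset.card_pos.mpr ⟨y v, this⟩
    omega
  | succ k ih =>
    intro y c hyc hy0 hyne hcard
    obtain ⟨v₀, hv₀⟩ : ∃ v, y v ≠ 0 := by
      by_contra h; push_neg at h; exact hyne (funext h)
    have hv₀pos : 0 < y v₀ := (hy0 v₀).lt_of_ne (Ne.symm hv₀)
    set P : Finset ℝ := (Finset.image y Finset.univ).filter (fun a => 0 < a) with hPdef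
    have hP : P.Nonempty :=
      ⟨y v₀, Finset.mem_filter.mpr ⟨Finset.mem_image_of_mem y (Finset.mem_univ v₀), hv₀pos⟩⟩
    set t : ℝ := P.min' hP with htdef
    have ht : 0 < t := (Finset.mem_filter.mp (P.min'_mem hP)).2
    have hlow : ∀ v, 0 < y v → t ≤ y v := fun v h =>
      P.min'_le _ (Finset.mem_filter.mpr ⟨Finset.mem_image_of_mem y (Finset.mem_univ v), h⟩)
    have hzero : ∀ v, ¬ 0 < y v → y v = 0 := fun v h => le_antisymm (not_lt.mp h) (hy0 v)
    set B : Finset V := Finset.univ.filter (fun v => 0 < y v) with hBdef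
    have hmemB : ∀ v, v ∈ B ↔ 0 < y v := fun v => by simp [hBdef]
    set I₀ : Finset (Fin m) := Finset.univ.filter (fun i => 0 < c i) with hI₀def
    have hBI : B = I₀.biUnion A := by
      ext v
      rw [hmemB, Finset.mem_biUnion]
      constructor
      · intro h
        obtain ⟨i, hi⟩ : ∃ i, v ∈ A i := by
          by_contra hvi; push_neg at hvi
          exact absurd (rep_eval0 A y c hyc hvi) h.ne'
        exact ⟨i, Finset.mem_filter.mpr ⟨Finset.mem_univ i,
          (rep_eval A hdisj y c hyc hi) ▸ h⟩, hi⟩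
      · rintro ⟨i, hiI, hvi⟩
        rw [rep_eval A hdisj y c hyc hvi]
        exact (Finset.mem_filter.mp hiI).2
    have hI₀ne : I₀.Nonempty := by
      have : v₀ ∈ I₀.biUnion A := hBI ▸ (hmemB v₀).mpr hv₀pos
      obtain ⟨i, hi, _⟩ := Finset.mem_biUnion.mp this
      exact ⟨i, hi⟩
    have hBne : B.Nonempty := ⟨v₀, (hmemB v₀).mpr hv₀pos⟩
    have hvolB : 0 < vol μ B := Finset.sum_pos (fun v _ => hμ v) hBne
    set y' : V → ℝ := fun v => y v - t * indVec B v with hy'def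
    have hy'0 : ∀ v, 0 ≤ y' v := by
      intro v
      by_cases hv : v ∈ B
      · have := hlow v ((hmemB v).mp hv)
        simp only [hy'def, indVec, hv, if_true, mul_one]
        linarith
      · simp only [hy'def, indVec, hv, if_false, mul_zero]
        linarith [hy0 v]
    have habs : ∀ u v, |y u - y v| = t * |indVec B u - indVec B v| + |y' u - y' v| := by
      intro u v
      by_cases hu : u ∈ B <;> by_cases hv : v ∈ B <;>
        simp only [hy'def, indVec, hu, hv, if_true, if_false, mul_one, mul_zero, sub_zero,
          sub_self, abs_zero]
      · rw [show y u - t - (y v - t) = y u - y v by ring]; ring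
      · have hyv : y v = 0 := hzero v (fun h => hv ((hmemB v).mpr h))
        have hyu : t ≤ y u := hlow u ((hmemB u).mp hu)
        rw [hyv, sub_zero, sub_zero, abs_of_nonneg (by linarith : (0:ℝ) ≤ y u),
          abs_of_nonneg (by linarith : (0:ℝ) ≤ y u - t), abs_one]
        ring
      · have hyu : y u = 0 := hzero u (fun h => hu ((hmemB u).mpr h))
        have hyv : t ≤ y v := hlow v ((hmemB v).mp hv)
        rw [hyu, zero_sub, zero_sub, zero_sub, abs_neg, abs_neg, abs_neg,
          abs_of_nonneg (by linarith : (0:ℝ) ≤ y v),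
          abs_of_nonneg (by linarith : (0:ℝ) ≤ y v - t), abs_one]
        ring
      · have hyu : y u = 0 := hzero u (fun h => hu ((hmemB u).mpr h))
        have hyv : y v = 0 := hzero v (fun h => hv ((hmemB v).mpr h))
        rw [hyu, hyv]; simp
    have hN : Nsum G w y = t * (2 * bdryW G w B) + Nsum G w y' := by
      rw [Nsum_split G w y (indVec B) y' t habs, Nsum_indVec]
    have hD : (∑ v, μ v * |y v|) = t * vol μ B + ∑ v, μ v * |y' v| := by
      have hvol : vol μ B = ∑ v, μ v * indVec B v := by
        rw [vol]
        rw [show (∑ v, μ v * indVec B v) = ∑ v, if v ∈ B then μ v else 0 by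
          apply Finset.sum_congr rfl; intro v _
          by_cases hv : v ∈ B <;> simp [indVec, hv]]
        rw [Finset.sum_ite_mem, Finset.univ_inter]
      rw [hvol, Finset.mul_sum, ← Finset.sum_add_distrib]
      apply Finset.sum_congr rfl
      intro v _
      rw [abs_of_nonneg (hy0 v), abs_of_nonneg (hy'0 v)]
      simp only [hy'def]; ring
    by_cases hy' : y' = 0
    · refine ⟨I₀, hI₀ne, ?_⟩
      have hN0 : Nsum G w y' = 0 := by simp [Nsum, hy']
      have hD0 : (∑ v, μ v * |y' v|) = 0 := by simp [hy']
      rw [Phi1_eq, hN, hN0, hD, hD0, add_zero, add_zero, ← hBI]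
      rw [show t * (2 * bdryW G w B) / 2 = t * bdryW G w B from by ring]
      rw [mul_div_mul_left _ _ ht.ne']
      exact le_of_eq rfl
    · set c' : Fin m → ℝ := fun i => if 0 < c i then c i - t else c i with hc'def
      have rep' : ∀ v, y' v = ∑ i, c' i * indVec (A i) v := by
        apply rep_of A hdisj y' c'
        · intro i v hv
          have hyv : y v = c i := rep_eval A hdisj y c hyc hv
          by_cases hci : 0 < c i
          · have hvB : v ∈ B := (hmemB v).mpr (hyv ▸ hci)
            simp only [hy'def, hc'def, indVec, hvB, if_true, mul_one, hci, hyv]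
          · have hvB : v ∉ B := fun h => hci (hyv ▸ (hmemB v).mp h)
            simp only [hy'def, hc'def, indVec, hvB, if_false, mul_zero, sub_zero, hci, hyv]
        · intro v hv
          have hyv : y v = 0 := rep_eval0 A y c hyc hv
          have hvB : v ∉ B := fun h => by rw [hmemB, hyv] at h; exact lt_irrefl 0 h
          simp only [hy'def, indVec, hvB, if_false, mul_zero, sub_zero, hyv]
      have hcard' : ((Finset.image y' Finset.univ).filter (fun a => 0 < a)).card ≤ k := by
        have hsub : ∀ a ∈ (Finset.image y' Finset.univ).filter (fun a => 0 < a),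
            a + t ∈ P.erase t := by
          intro a ha
          obtain ⟨hmem, hapos⟩ := Finset.mem_filter.mp ha
          obtain ⟨v, _, hva⟩ := Finset.mem_image.mp hmem
          have hvB : v ∈ B := by
            by_contra hvB
            have : y' v = y v := by
              simp only [hy'def, indVec, hvB, if_false, mul_zero, sub_zero]
            rw [hva] at this
            have hyv0 : y v = 0 := hzero v (fun h => hvB ((hmemB v).mpr h))
            rw [hyv0] at this; exact hapos.ne' this
          have hav : a + t = y v := by
            simp only [hy'def, indVec, hvB, if_true, mul_one] at hva
            linarith [hva]
          rw [Finset.mem_erase]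
          constructor
          · intro h
            have : a = 0 := by linarith
            rw [this] at hapos; exact lt_irrefl 0 hapos
          · rw [hav]
            exact Finset.mem_filter.mpr ⟨Finset.mem_image_of_mem y (Finset.mem_univ v),
              by rw [← hav]; positivity⟩
        have hinj : ∀ a ∈ (Finset.image y' Finset.univ).filter (fun a => 0 < a),
            ∀ b ∈ (Finset.image y' Finset.univ).filter (fun a => 0 < a),
            a + t = b + t → a = b := fun a _ b _ h => by linarith
        have := Finset.card_le_card_of_injOn _ hsub hinj
        have herase := Finset.card_erase_of_mem (P.min'_mem hP)
        rw [← htdef] at herase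
        omega
      obtain ⟨I', hI'ne, hI'⟩ := ih y' c' rep' hy'0 hy' hcard'
      have hD' : 0 < ∑ v, μ v * |y' v| := Dsum_pos μ hμ y' hy'
      have hmed : min (phi G μ w B) (Phi1 G μ w y') ≤ Phi1 G μ w y := by
        conv_rhs => rw [Phi1_eq G μ w y, hN, hD]
        rw [show (t * (2 * bdryW G w B) + Nsum G w y') / 2
            = t * bdryW G w B + Nsum G w y' / 2 from by ring]
        have hmm := mediant (t * bdryW G w B) (Nsum G w y' / 2) (t * vol μ B)
          (∑ v, μ v * |y' v|) (mul_pos ht hvolB) hD'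
        rw [mul_div_mul_left _ _ ht.ne'] at hmm
        rw [← Phi1_eq G μ w y'] at hmm
        exact hmm
      rcases le_total (phi G μ w B) (Phi1 G μ w y') with h | h
      · refine ⟨I₀, hI₀ne, ?_⟩
        rw [← hBI]
        calc phi G μ w B = min (phi G μ w B) (Phi1 G μ w y') := (min_eq_left h).symm
          _ ≤ Phi1 G μ w y := hmed
      · refine ⟨I', hI'ne, ?_⟩
        calc phi G μ w (I'.biUnion A) ≤ Phi1 G μ w y' := hI'
          _ = min (phi G μ w B) (Phi1 G μ w y') := (min_eq_right h).symm
          _ ≤ Phi1 G μ w y := hmed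

theorem selection_lemma [Fintype V] [DecidableEq V] (G : SimpleGraph V) [DecidableRel G.Adj]
    (μ : V → ℝ) (w : Sym2 V → ℝ) (hμ : ∀ v, 0 < μ v) (hw : ∀ e ∈ G.edgeSet, 0 < w e)
    {m : ℕ} (A : Fin m → Finset V) (hne : ∀ i, (A i).Nonempty)
    (hdisj : ∀ i j, i ≠ j → Disjoint (A i) (A j))
    (x : V → ℝ) (hx : x ∈ Submodule.span ℝ (Set.range fun i => indVec (A i))) (hx0 : x ≠ 0) :
    ∃ I : Finset (Fin m), I.Nonempty ∧ phi G μ w (I.biUnion A) ≤ Phi1 G μ w x := by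
  obtain ⟨c, hc⟩ := (Submodule.mem_span_range_iff_exists_fun ℝ).mp hx
  have hxv : ∀ v, x v = ∑ i, c i * indVec (A i) v := by
    intro v
    calc x v = (∑ i, c i • indVec (A i)) v := by rw [hc]
      _ = ∑ i, c i * indVec (A i) v := by simp [Finset.sum_apply]
  set y : V → ℝ := fun v => |x v| with hydef
  have hrep : ∀ v, y v = ∑ i, |c i| * indVec (A i) v := by
    apply rep_of A hdisj y (fun i => |c i|)
    · intro i v hv
      simp only [hydef, rep_eval A hdisj x c hxv hv]
    · intro v hv
      simp only [hydef, rep_eval0 A x c hxv hv, abs_zero]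
  have hy0 : ∀ v, 0 ≤ y v := fun v => abs_nonneg _
  have hyne : y ≠ 0 := by
    intro h
    exact hx0 (funext fun v => abs_eq_zero.mp (congrFun h v))
  obtain ⟨I, hIne, hI⟩ := aux_selection G μ w hμ A hdisj
    ((Finset.image y Finset.univ).filter (fun a => 0 < a)).card y (fun i => |c i|)
    hrep hy0 hyne le_rfl
  refine ⟨I, hIne, le_trans hI ?_⟩
  rw [Phi1_eq G μ w y, Phi1]
  have hDeq : (∑ v, μ v * |y v|) = ∑ v, μ v * |x v| := by
    apply Finset.sum_congr rfl; intro v _; rw [hydef]; simp [abs_abs]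
  have hDpos : 0 < ∑ v, μ v * |x v| := Dsum_pos μ hμ x hx0
  rw [hDeq]
  have hNle : Nsum G w y ≤ ∑ u, ∑ v, if G.Adj u v then w s(u,v) * |x u - x v| else 0 := by
    apply Finset.sum_le_sum; intro u _
    apply Finset.sum_le_sum; intro v _
    by_cases hadj : G.Adj u v
    · simp only [hadj, if_true]
      apply mul_le_mul_of_nonneg_left _ (hw _ (G.mem_edgeSet.mpr hadj)).le
      simp only [hydef]
      exact abs_abs_sub_abs_le_abs_sub _ _
    · simp [hadj]
  gcongr
end

section
/- Let x ∈ ℝ^V be a nonnegative nonzero vector on the vertices of a weighted graph G=(V,E,μ,w). Then there exists t with 0 ≤ t < max_v x_v such that Φ₁(x) ≥ φ(Bᵗ), where Bᵗ = {v ∈ V : x_v > t} is the superlevel set, Φ₁(x) = Σ_{{u,v}∈E} w_{uv}|x_u-x_v| / Σ_v μ_v x_v, and φ(B) = w(∂B)/μ(B). -/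
/-!
Put `f t = w(∂Bᵗ)` and `g t = μ(Bᵗ)`. By the layer cake representation, on `[0, M]` with
`M = max x` the integrals of `f` and `g` are the numerator and the denominator of `Φ₁(x)`, so
`∫₀^M (f - Φ₁(x) g) = 0` and `f t ≤ Φ₁(x) g t` for some `t ∈ (0, M)`. There `g t > 0`, since a
maximiser of `x` lies in `Bᵗ`.
-/

open Finset

variable {V : Type*}

open MeasureTheory

theorem intervalIntegrable_indicator_one {L M : ℝ} {s : Set ℝ} (hs : MeasurableSet s) :
    IntervalIntegrable (s.indicator (1 : ℝ → ℝ)) volume L M :=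
  intervalIntegrable_iff.2 ((intervalIntegrable_const (c := (1 : ℝ))).def'.indicator hs)

theorem intervalIntegral_indicator_Ico_one {L M a b : ℝ} (hLa : L ≤ a) (hbM : b ≤ M) :
    ∫ t in L..M, (Set.Ico a b).indicator 1 t = max (b - a) 0 := by
  rcases le_or_gt b a with hba | hab
  · simp [hba]
  have hae : (Set.Ico a b).indicator (1 : ℝ → ℝ) =ᵐ[volume] (Set.Ioc a b).indicator 1 :=
    indicator_ae_eq_of_ae_eq_set Ico_ae_eq_Ioc
  rw [intervalIntegral.integral_of_le (by linarith), integral_congr_ae (ae_restrict_of_ae hae),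
    integral_indicator_one measurableSet_Ioc, measureReal_restrict_apply measurableSet_Ioc,
    Set.inter_eq_left.2 (Set.Ioc_subset_Ioc hLa hbM), Real.volume_real_Ioc]

theorem exists_le_mul_of_integral_le_mul_integral {f g : ℝ → ℝ} {a b c : ℝ} (hab : a < b)
    (hf : IntervalIntegrable f volume a b) (hg : IntervalIntegrable g volume a b)
    (h : ∫ t in a..b, f t ≤ c * ∫ t in a..b, g t) : ∃ t ∈ Set.Ioo a b, f t ≤ c * g t := by
  by_contra! hlt
  have hpos := intervalIntegral.intervalIntegral_pos_of_pos_on (hf.sub (hg.const_mul c))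
    (fun t ht => sub_pos.2 (hlt t ht)) hab
  rw [intervalIntegral.integral_sub hf (hg.const_mul c),
    intervalIntegral.integral_const_mul] at hpos
  linarith

theorem sum_sum_mul_abs_sub_eq_two_mul {ι : Type*} (s : Finset ι) (W : ι → ι → ℝ)
    (hW : ∀ i j, W i j = W j i) (x : ι → ℝ) :
    ∑ i ∈ s, ∑ j ∈ s, W i j * |x i - x j| = 2 * ∑ i ∈ s, ∑ j ∈ s, W i j * max (x i - x j) 0 := by
  have habs (i j : ι) : |x i - x j| = max (x i - x j) 0 + max (x j - x i) 0 := by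
    rw [← posPart_add_negPart, posPart_def, negPart_def, neg_sub]
  have hswap : ∑ i ∈ s, ∑ j ∈ s, W i j * max (x j - x i) 0 =
      ∑ i ∈ s, ∑ j ∈ s, W i j * max (x i - x j) 0 := by
    rw [Finset.sum_comm]
    simp_rw [hW]
  simp_rw [habs, mul_add, Finset.sum_add_distrib, hswap]
  ring

theorem intervalIntegrable_fun_sum {ι : Type*} (s : Finset ι) {f : ι → ℝ → ℝ} {L M : ℝ}
    (h : ∀ i ∈ s, IntervalIntegrable (f i) volume L M) :
    IntervalIntegrable (fun t => ∑ i ∈ s, f i t) volume L M := by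
  simpa only [Finset.sum_fn] using IntervalIntegrable.sum s h

section Superlevel

variable [Fintype V] (μ : V → ℝ) (x : V → ℝ)

noncomputable def superlevelSet (t : ℝ) : Finset V := univ.filter fun v => t < x v

theorem vol_superlevelSet {t : ℝ} (ht : 0 ≤ t) :
    vol μ (superlevelSet x t) = ∑ v, μ v * (Set.Ico 0 (x v)).indicator 1 t := by
  simp only [vol, superlevelSet, sum_filter]
  refine sum_congr rfl fun v _ => ?_
  by_cases hv : t < x v <;> simp [hv, ht]

theorem intervalIntegrable_vol_superlevelSet {M : ℝ} (hM : 0 ≤ M) :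
    IntervalIntegrable (fun t => vol μ (superlevelSet x t)) volume 0 M := by
  rw [intervalIntegrable_congr fun t ht => vol_superlevelSet μ x (Set.uIoc_of_le hM ▸ ht).1.le]
  exact intervalIntegrable_fun_sum _ fun v _ =>
    (intervalIntegrable_indicator_one measurableSet_Ico).const_mul _

theorem integral_vol_superlevelSet {M : ℝ} (hM : 0 ≤ M) (hx : ∀ v, 0 ≤ x v)
    (hxM : ∀ v, x v ≤ M) :
    ∫ t in 0..M, vol μ (superlevelSet x t) = ∑ v, μ v * x v := by
  rw [intervalIntegral.integral_congr fun t ht => vol_superlevelSet μ x (Set.uIcc_of_le hM ▸ ht).1,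
    intervalIntegral.integral_finsetSum fun v _ =>
      (intervalIntegrable_indicator_one measurableSet_Ico).const_mul _]
  simp_rw [intervalIntegral.integral_const_mul, intervalIntegral_indicator_Ico_one le_rfl (hxM _),
    sub_zero, max_eq_left (hx _)]

end Superlevel

section Boundary

variable (G : SimpleGraph V) [DecidableRel G.Adj] (w : Sym2 V → ℝ)

noncomputable def weightedAdj (u v : V) : ℝ := if G.Adj u v then w s(u, v) else 0

theorem weightedAdj_comm (u v : V) : weightedAdj G w u v = weightedAdj G w v u := by
  simp only [weightedAdj, G.adj_comm u v, Sym2.eq_swap]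

variable [Fintype V] [DecidableEq V] (x : V → ℝ)

theorem bdryW_superlevelSet (t : ℝ) :
    bdryW G w (superlevelSet x t) =
      ∑ u, ∑ v, weightedAdj G w u v * (Set.Ico (x v) (x u)).indicator 1 t := by
  simp only [bdryW, superlevelSet, compl_filter, sum_filter]
  refine sum_congr rfl fun u _ => ?_
  split_ifs with hu
  · refine sum_congr rfl fun v _ => ?_
    by_cases hv : t < x v <;> simp [hu, hv, weightedAdj, le_of_not_gt]
  · simp [hu]

theorem intervalIntegrable_bdryW_superlevelSet (L M : ℝ) :
    IntervalIntegrable (fun t => bdryW G w (superlevelSet x t)) volume L M := by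
  simp_rw [bdryW_superlevelSet]
  exact intervalIntegrable_fun_sum _ fun u _ => intervalIntegrable_fun_sum _ fun v _ =>
    (intervalIntegrable_indicator_one measurableSet_Ico).const_mul _

theorem integral_bdryW_superlevelSet {M : ℝ} (hx : ∀ v, 0 ≤ x v) (hxM : ∀ v, x v ≤ M) :
    ∫ t in 0..M, bdryW G w (superlevelSet x t) =
      (∑ u, ∑ v, if G.Adj u v then w s(u, v) * |x u - x v| else 0) / 2 := by
  have hint (u v : V) : IntervalIntegrable (fun t => weightedAdj G w u v *
      (Set.Ico (x v) (x u)).indicator 1 t) volume 0 M :=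
    (intervalIntegrable_indicator_one measurableSet_Ico).const_mul _
  simp_rw [bdryW_superlevelSet]
  rw [intervalIntegral.integral_finsetSum fun u _ => ?_]
  · simp_rw [intervalIntegral.integral_finsetSum fun v _ => hint _ v,
      intervalIntegral.integral_const_mul, intervalIntegral_indicator_Ico_one (hx _) (hxM _)]
    have h := sum_sum_mul_abs_sub_eq_two_mul univ _ (weightedAdj_comm G w) x
    simp only [weightedAdj, ← ite_zero_mul] at h ⊢
    rw [h]
    ring
  · exact intervalIntegrable_fun_sum _ fun v _ => hint u v

end Boundary

theorem layer_cake_level_set_general [Fintype V] [DecidableEq V] [Nonempty V]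
    (G : SimpleGraph V) [DecidableRel G.Adj]
    (μ : V → ℝ) (w : Sym2 V → ℝ) (hμ : ∀ v, 0 < μ v)
    (x : V → ℝ) (hx : ∀ v, 0 ≤ x v) (hx0 : x ≠ 0) :
    ∃ t : ℝ, 0 ≤ t ∧ t < Finset.univ.sup' Finset.univ_nonempty x ∧
      phi G μ w (Finset.univ.filter (fun v => t < x v)) ≤ Phi1 G μ w x := by
  set M := univ.sup' univ_nonempty x
  have hxM : ∀ v, x v ≤ M := fun v => le_sup' x (mem_univ v)
  obtain ⟨v₀, hv₀⟩ : ∃ v, 0 < x v := by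
    obtain ⟨v, hv⟩ := Function.ne_iff.mp hx0
    exact ⟨v, (hx v).lt_of_ne' hv⟩
  have hM : 0 < M := hv₀.trans_le (hxM v₀)
  have hmass : 0 < ∑ v, μ v * x v :=
    sum_pos' (fun v _ => mul_nonneg (hμ v).le (hx v)) ⟨v₀, mem_univ _, mul_pos (hμ v₀) hv₀⟩
  have hPhi1 : ∫ t in 0..M, bdryW G w (superlevelSet x t) ≤
      Phi1 G μ w x * ∫ t in 0..M, vol μ (superlevelSet x t) := by
    have habs : ∑ v, μ v * |x v| = ∑ v, μ v * x v :=
      sum_congr rfl fun v _ => by rw [abs_of_nonneg (hx v)]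
    rw [integral_bdryW_superlevelSet G w x hx hxM, integral_vol_superlevelSet μ x hM.le hx hxM,
      Phi1, habs, div_mul_cancel₀ _ hmass.ne']
  obtain ⟨t, ⟨ht0, htM⟩, ht⟩ := exists_le_mul_of_integral_le_mul_integral hM
    (intervalIntegrable_bdryW_superlevelSet G w x 0 M)
    (intervalIntegrable_vol_superlevelSet μ x hM.le) hPhi1
  obtain ⟨vmax, -, hvmax⟩ := exists_mem_eq_sup' univ_nonempty x
  have hvol : 0 < vol μ (superlevelSet x t) :=
    sum_pos (fun v _ => hμ v) ⟨vmax, mem_filter.2 ⟨mem_univ _, hvmax ▸ htM⟩⟩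
  exact ⟨t, ht0.le, htM, (div_le_iff₀ hvol).2 ht⟩

theorem layer_cake_level_set [Fintype V] [DecidableEq V] [Nonempty V]
    (G : SimpleGraph V) [DecidableRel G.Adj]
    (μ : V → ℝ) (w : Sym2 V → ℝ) (hμ : ∀ v, 0 < μ v) (hw : ∀ e ∈ G.edgeSet, 0 < w e)
    (x : V → ℝ) (hx : ∀ v, 0 ≤ x v) (hx0 : x ≠ 0) :
    ∃ t : ℝ, 0 ≤ t ∧ t < Finset.univ.sup' Finset.univ_nonempty x ∧
      phi G μ w (Finset.univ.filter (fun v => t < x v)) ≤ Phi1 G μ w x :=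
  layer_cake_level_set_general G μ w hμ x hx hx0
end

section
/- For any weighted forest G=(V,E,μ,w) with n vertices and any 1 ≤ k ≤ n, the nonlinear Courant–Fischer–Weyl minimax principle holds for the L¹-Rayleigh quotient: min over k-dimensional linear subspaces X of ℝⁿ of max_{x∈X∖{0}} Φ₁(x) equals max over (n-k+1)-dimensional linear subspaces X of ℝⁿ of min_{x∈X∖{0}} Φ₁(x), and both equal the Cheeger k-constant h_k(G). -/
open Finset

variable {V : Type*}

/-!
Write `h = h_k(G)` and `n = |V|`. On the span of the indicators of a subpartition `A` the
numerator of `Φ₁` is subadditive and its denominator additive, so `Φ₁ ≤ maxᵢ φ(Aᵢ)` there; an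
optimal `A` gives a `k`-dimensional space on which `Φ₁ ≤ h`. Conversely, no `k` disjoint sets have
`φ < h`. Minimal such sets are connected, i.e. subtrees of the forest, and subtrees satisfy
packing–covering duality, so fewer than `k` vertices meet all of them. The other vertices contain
a set `U` of `n - k + 1` vertices all of whose subsets have `φ ≥ h`, and cutting a vector supported
in `U` into level sets shows `Φ₁ ≥ h` on the coordinate space of `U`. As `k + (n - k + 1) > n`,
every `k`-dimensional subspace meets the latter and every `(n - k + 1)`-dimensional one the former.
-/

section MinMax

open Module

variable {K E : Type*} [DivisionRing K] [AddCommGroup E] [Module K E] [FiniteDimensional K E]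

theorem Submodule.exists_mem_mem_ne_zero_of_finrank_lt {X Y : Submodule K E}
    (h : finrank K E < finrank K X + finrank K Y) : ∃ x ∈ X, x ∈ Y ∧ x ≠ 0 := by
  by_contra! hXY
  exact h.not_ge (finrank_add_finrank_le_of_disjoint (disjoint_def.2 hXY))

theorem sInf_sSup_eq_of_subspaces {f : E → ℝ} (hf : BddAbove (f '' {0}ᶜ)) {k m : ℕ} {h : ℝ}
    (hk : 0 < k) (hkm : finrank K E < k + m) {X₀ Y₀ : Submodule K E}
    (hX₀ : finrank K X₀ = k) (hY₀ : finrank K Y₀ = m)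
    (hfX₀ : ∀ x ∈ X₀, x ≠ 0 → f x ≤ h) (hfY₀ : ∀ y ∈ Y₀, y ≠ 0 → h ≤ f y) :
    sInf {r | ∃ X : Submodule K E, finrank K X = k ∧
      r = sSup {s | ∃ x : E, x ∈ X ∧ x ≠ 0 ∧ s = f x}} = h := by
  have hbdd (X : Submodule K E) : BddAbove {s | ∃ x : E, x ∈ X ∧ x ≠ 0 ∧ s = f x} :=
    hf.mono <| by rintro _ ⟨x, -, hx0, rfl⟩; exact ⟨x, hx0, rfl⟩
  have h_le (X : Submodule K E) (hX : finrank K X = k) :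
      h ≤ sSup {s | ∃ x : E, x ∈ X ∧ x ≠ 0 ∧ s = f x} := by
    obtain ⟨x, hxX, hxY, hx0⟩ :=
      Submodule.exists_mem_mem_ne_zero_of_finrank_lt (X := X) (Y := Y₀) (by omega)
    exact (hfY₀ x hxY hx0).trans (le_csSup (hbdd X) ⟨x, hxX, hx0, rfl⟩)
  obtain ⟨x₀, hx₀, hx₀0⟩ := Submodule.exists_mem_ne_zero_of_ne_bot
    (Submodule.one_le_finrank_iff.1 (hX₀ ▸ hk : 0 < finrank K X₀))
  refine IsLeast.csInf_eq ⟨⟨X₀, hX₀, le_antisymm (h_le X₀ hX₀) ?_⟩, ?_⟩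
  · refine csSup_le ⟨_, x₀, hx₀, hx₀0, rfl⟩ ?_
    rintro _ ⟨x, hx, hx0, rfl⟩
    exact hfX₀ x hx hx0
  · rintro _ ⟨X, hX, rfl⟩
    exact h_le X hX

theorem sSup_sInf_eq_of_subspaces {f : E → ℝ} (hf : BddBelow (f '' {0}ᶜ)) {k m : ℕ} {h : ℝ}
    (hm : 0 < m) (hkm : finrank K E < k + m) {X₀ Y₀ : Submodule K E}
    (hX₀ : finrank K X₀ = k) (hY₀ : finrank K Y₀ = m)
    (hfX₀ : ∀ x ∈ X₀, x ≠ 0 → f x ≤ h) (hfY₀ : ∀ y ∈ Y₀, y ≠ 0 → h ≤ f y) :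
    sSup {r | ∃ Y : Submodule K E, finrank K Y = m ∧
      r = sInf {s | ∃ y : E, y ∈ Y ∧ y ≠ 0 ∧ s = f y}} = h := by
  have hbdd (Y : Submodule K E) : BddBelow {s | ∃ y : E, y ∈ Y ∧ y ≠ 0 ∧ s = f y} :=
    hf.mono <| by rintro _ ⟨y, -, hy0, rfl⟩; exact ⟨y, hy0, rfl⟩
  have le_h (Y : Submodule K E) (hY : finrank K Y = m) :
      sInf {s | ∃ y : E, y ∈ Y ∧ y ≠ 0 ∧ s = f y} ≤ h := by
    obtain ⟨y, hyX, hyY, hy0⟩ :=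
      Submodule.exists_mem_mem_ne_zero_of_finrank_lt (X := X₀) (Y := Y) (by omega)
    exact (csInf_le (hbdd Y) ⟨y, hyY, hy0, rfl⟩).trans (hfX₀ y hyX hy0)
  obtain ⟨y₀, hy₀, hy₀0⟩ := Submodule.exists_mem_ne_zero_of_ne_bot
    (Submodule.one_le_finrank_iff.1 (hY₀ ▸ hm : 0 < finrank K Y₀))
  refine IsGreatest.csSup_eq ⟨⟨Y₀, hY₀, le_antisymm ?_ (le_h Y₀ hY₀)⟩, ?_⟩
  · refine le_csInf ⟨_, y₀, hy₀, hy₀0, rfl⟩ ?_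
    rintro _ ⟨y, hy, hy0, rfl⟩
    exact hfY₀ y hy hy0
  · rintro _ ⟨Y, hY, rfl⟩
    exact le_h Y hY

end MinMax

section Indicators

open Finset Function

variable [DecidableEq V]

lemma sum_smul_indVec_apply_of_mem {ι : Type*} [Fintype ι] {A : ι → Finset V}
    (hA : Pairwise (Disjoint on A)) (c : ι → ℝ) {v : V} {j : ι} (hv : v ∈ A j) :
    (∑ i, c i • indVec (A i)) v = c j := by
  rw [Finset.sum_apply, sum_eq_single j (fun i _ hij => by
    simp [indVec, disjoint_right.1 (hA hij) hv]) (by simp)]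
  simp [indVec, hv]

lemma sum_smul_indVec_apply_of_forall_notMem {ι : Type*} [Fintype ι] {A : ι → Finset V}
    (c : ι → ℝ) {v : V} (hv : ∀ i, v ∉ A i) : (∑ i, c i • indVec (A i)) v = 0 := by
  simp [indVec, hv]

lemma linearIndependent_indVec {ι : Type*} [Fintype ι] {A : ι → Finset V}
    (hne : ∀ i, (A i).Nonempty) (hA : Pairwise (Disjoint on A)) :
    LinearIndependent ℝ fun i => indVec (A i) := by
  refine Fintype.linearIndependent_iff.2 fun c hc i => ?_
  obtain ⟨v, hv⟩ := hne i
  simpa [sum_smul_indVec_apply_of_mem hA c hv] using congrFun hc v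

lemma finrank_span_indVec {ι : Type*} [Fintype ι] {A : ι → Finset V}
    (hne : ∀ i, (A i).Nonempty) (hA : Pairwise (Disjoint on A)) :
    Module.finrank ℝ (Submodule.span ℝ (Set.range fun i => indVec (A i))) = Fintype.card ι :=
  finrank_span_eq_card (linearIndependent_indVec hne hA)

lemma eq_zero_of_mem_span_indVec {ι : Type*} [Fintype ι] {A : ι → Finset V} {x : V → ℝ}
    (hx : x ∈ Submodule.span ℝ (Set.range fun i => indVec (A i))) {v : V} (hv : ∀ i, v ∉ A i) :
    x v = 0 := by
  obtain ⟨c, rfl⟩ := (Submodule.mem_span_range_iff_exists_fun ℝ).1 hx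
  exact sum_smul_indVec_apply_of_forall_notMem c hv

end Indicators

section Rayleigh

open Finset Function

variable [Fintype V] {G : SimpleGraph V} [DecidableRel G.Adj]
  {μ : V → ℝ} {w : Sym2 V → ℝ}

variable (G w) in
/-- The sum runs over ordered pairs, so every edge is counted twice: hence the `/ 2` in `Phi1`. -/
noncomputable def totalVar (x : V → ℝ) : ℝ :=
  ∑ u, ∑ v, if G.Adj u v then w s(u, v) * |x u - x v| else 0

variable (μ) in
noncomputable def normL1 (x : V → ℝ) : ℝ := ∑ v, μ v * |x v|

lemma totalVar_nonneg (hw : ∀ e ∈ G.edgeSet, 0 ≤ w e) (x : V → ℝ) : 0 ≤ totalVar G w x := by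
  refine sum_nonneg fun u _ => sum_nonneg fun v _ => ?_
  split_ifs with huv
  · exact mul_nonneg (hw _ huv) (abs_nonneg _)
  · exact le_rfl

lemma normL1_nonneg (hμ : ∀ v, 0 < μ v) (x : V → ℝ) : 0 ≤ normL1 μ x :=
  sum_nonneg fun v _ => mul_nonneg (hμ v).le (abs_nonneg _)

lemma normL1_pos (hμ : ∀ v, 0 < μ v) {x : V → ℝ} (hx : x ≠ 0) : 0 < normL1 μ x := by
  obtain ⟨v, hv⟩ := Function.ne_iff.1 hx
  exact sum_pos' (fun u _ => mul_nonneg (hμ u).le (abs_nonneg _))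
    ⟨v, mem_univ v, mul_pos (hμ v) (abs_pos.2 hv)⟩

lemma totalVar_sum_smul_le (hw : ∀ e ∈ G.edgeSet, 0 ≤ w e) {ι : Type*} [Fintype ι]
    (c : ι → ℝ) (y : ι → V → ℝ) :
    totalVar G w (∑ i, c i • y i) ≤ ∑ i, |c i| * totalVar G w (y i) := calc
  _ ≤ ∑ u, ∑ v, ∑ i, |c i| * (if G.Adj u v then w s(u, v) * |y i u - y i v| else 0) := by
    refine Finset.sum_le_sum fun u _ => Finset.sum_le_sum fun v _ => ?_
    split_ifs with huv
    · simp only [Finset.sum_apply, Pi.smul_apply, smul_eq_mul, ← sum_sub_distrib, ← mul_sub]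
      calc w s(u, v) * |∑ i, c i * (y i u - y i v)|
          ≤ w s(u, v) * ∑ i, |c i * (y i u - y i v)| :=
            mul_le_mul_of_nonneg_left (abs_sum_le_sum_abs _ _) (hw _ huv)
        _ = ∑ i, |c i| * (w s(u, v) * |y i u - y i v|) := by
            rw [mul_sum]; exact sum_congr rfl fun i _ => by rw [abs_mul]; ring
    · simp
  _ = ∑ i, |c i| * totalVar G w (y i) := by
    simp_rw [totalVar, mul_sum]
    exact (sum_comm.trans (sum_congr rfl fun _ _ => sum_comm)).symm

lemma totalVar_abs_le (hw : ∀ e ∈ G.edgeSet, 0 ≤ w e) (x : V → ℝ) :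
    totalVar G w |x| ≤ totalVar G w x := by
  refine Finset.sum_le_sum fun u _ => Finset.sum_le_sum fun v _ => ?_
  split_ifs with huv
  · exact mul_le_mul_of_nonneg_left (abs_abs_sub_abs_le_abs_sub _ _) (hw _ huv)
  · exact le_rfl

variable [DecidableEq V]

lemma Phi1_eq_div (x : V → ℝ) : Phi1 G μ w x = totalVar G w x / 2 / normL1 μ x := rfl

lemma Phi1_nonneg (hμ : ∀ v, 0 < μ v) (hw : ∀ e ∈ G.edgeSet, 0 ≤ w e) (x : V → ℝ) :
    0 ≤ Phi1 G μ w x :=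
  div_nonneg (div_nonneg (totalVar_nonneg hw x) zero_le_two) (normL1_nonneg hμ x)

lemma bdryW_le_mul_vol (hμ : ∀ v, 0 < μ v) {A : Finset V} {r : ℝ} (h : phi G μ w A ≤ r) :
    bdryW G w A ≤ r * vol μ A := by
  rcases A.eq_empty_or_nonempty with rfl | hA
  · simp [bdryW, vol]
  · exact (div_le_iff₀ (sum_pos (fun v _ => hμ v) hA)).1 h

lemma mul_vol_le_bdryW (hμ : ∀ v, 0 < μ v) {A : Finset V} (hA : A.Nonempty) {r : ℝ}
    (h : r ≤ phi G μ w A) : r * vol μ A ≤ bdryW G w A :=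
  (le_div_iff₀ (sum_pos (fun v _ => hμ v) hA)).1 h

lemma bdryW_union {C D : Finset V} (hCD : Disjoint C D) (hno : ∀ u ∈ C, ∀ v ∈ D, ¬ G.Adj u v) :
    bdryW G w (C ∪ D) = bdryW G w C + bdryW G w D := by
  have half (C D : Finset V) (hCD : Disjoint C D) (hno : ∀ u ∈ C, ∀ v ∈ D, ¬ G.Adj u v) :
      ∑ u ∈ C, ∑ v ∈ (C ∪ D)ᶜ, (if G.Adj u v then w s(u, v) else 0) = bdryW G w C := by
    refine sum_congr rfl fun u hu => ?_
    have hD : Cᶜ \ (C ∪ D)ᶜ = D := by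
      ext v
      have : v ∈ D → v ∉ C := fun h => disjoint_right.1 hCD h
      simp only [mem_sdiff, mem_compl, mem_union]
      tauto
    rw [← sum_sdiff (compl_subset_compl.2 (subset_union_left : C ⊆ C ∪ D)), hD,
      sum_eq_zero fun v hv => if_neg (hno u hu v hv), zero_add]
  rw [bdryW, sum_union hCD, half C D hCD hno, union_comm,
    half D C hCD.symm fun u hu v hv huv => hno v hv u hu huv.symm]

lemma phi_le_or_phi_le_of_union (hμ : ∀ v, 0 < μ v) {C D : Finset V} (hCD : Disjoint C D)
    (hC : C.Nonempty) (hD : D.Nonempty) (hno : ∀ u ∈ C, ∀ v ∈ D, ¬ G.Adj u v) :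
    phi G μ w C ≤ phi G μ w (C ∪ D) ∨ phi G μ w D ≤ phi G μ w (C ∪ D) := by
  by_contra! h
  have hvol (B : Finset V) (hB : B.Nonempty) : 0 < vol μ B := sum_pos (fun v _ => hμ v) hB
  have hCD' : phi G μ w (C ∪ D) * vol μ (C ∪ D) = bdryW G w (C ∪ D) :=
    div_mul_cancel₀ _ (hvol _ (hC.mono subset_union_left)).ne'
  rw [vol, sum_union hCD, bdryW_union hCD hno] at hCD'
  have h₁ := (lt_div_iff₀ (hvol C hC)).1 h.1
  have h₂ := (lt_div_iff₀ (hvol D hD)).1 h.2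
  simp only [vol] at h₁ h₂
  linarith

lemma totalVar_indVec (A : Finset V) : totalVar G w (indVec A) = 2 * bdryW G w A := by
  have row (u : V) : (∑ v, if G.Adj u v then w s(u, v) * |indVec A u - indVec A v| else 0) =
      (∑ v ∈ A, if G.Adj u v then w s(u, v) * |indVec A u - 1| else 0) +
        ∑ v ∈ Aᶜ, if G.Adj u v then w s(u, v) * |indVec A u| else 0 := by
    rw [← sum_add_sum_compl A]
    congr 1 <;> refine sum_congr rfl fun v hv => ?_ <;> simp_all [indVec]
  have swap : ∑ u ∈ Aᶜ, ∑ v ∈ A, (if G.Adj u v then w s(u, v) else 0) = bdryW G w A := by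
    rw [bdryW, sum_comm]
    refine sum_congr rfl fun u _ => sum_congr rfl fun v _ => ?_
    simp [G.adj_comm, Sym2.eq_swap]
  simp_rw [totalVar, row, ← sum_add_sum_compl A (fun u => _ + _)]
  rw [two_mul]
  nth_rw 2 [← swap]
  congr 1 <;> refine sum_congr rfl fun u hu => ?_ <;> simp_all [indVec]

lemma normL1_sum_smul_indVec {ι : Type*} [Fintype ι] {A : ι → Finset V}
    (hA : Pairwise (Disjoint on A)) (c : ι → ℝ) :
    normL1 μ (∑ i, c i • indVec (A i)) = ∑ i, |c i| * vol μ (A i) := by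
  have pointwise (v : V) :
      |(∑ i, c i • indVec (A i)) v| = (∑ i, |c i| • indVec (A i)) v := by
    by_cases hv : ∃ j, v ∈ A j
    · obtain ⟨j, hj⟩ := hv
      rw [sum_smul_indVec_apply_of_mem hA _ hj, sum_smul_indVec_apply_of_mem hA _ hj]
    · push Not at hv
      simp [sum_smul_indVec_apply_of_forall_notMem _ hv]
  simp only [normL1, pointwise]
  simp only [vol, Finset.sum_apply, Pi.smul_apply, smul_eq_mul, mul_sum]
  rw [sum_comm]
  refine sum_congr rfl fun i _ => ?_
  simp [indVec, mul_comm]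

lemma mem_span_indVec_singleton (x : V → ℝ) :
    x ∈ Submodule.span ℝ (Set.range fun v : V => indVec {v}) :=
  (Submodule.mem_span_range_iff_exists_fun ℝ).2 ⟨x, by ext u; simp [indVec]⟩

lemma Phi1_le_of_mem_span (hμ : ∀ v, 0 < μ v) (hw : ∀ e ∈ G.edgeSet, 0 ≤ w e) {ι : Type*}
    [Fintype ι] {A : ι → Finset V} (hA : Pairwise (Disjoint on A)) {r : ℝ}
    (hr : ∀ i, phi G μ w (A i) ≤ r) {x : V → ℝ}
    (hx : x ∈ Submodule.span ℝ (Set.range fun i => indVec (A i))) (hx0 : x ≠ 0) :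
    Phi1 G μ w x ≤ r := by
  obtain ⟨c, rfl⟩ := (Submodule.mem_span_range_iff_exists_fun ℝ).1 hx
  rw [Phi1_eq_div, div_le_iff₀ (normL1_pos hμ hx0), normL1_sum_smul_indVec hA, mul_sum]
  calc totalVar G w (∑ i, c i • indVec (A i)) / 2
      ≤ (∑ i, |c i| * totalVar G w (indVec (A i))) / 2 := by
        gcongr; exact totalVar_sum_smul_le hw _ _
    _ = ∑ i, |c i| * bdryW G w (A i) := by
        simp only [totalVar_indVec, sum_div]; exact sum_congr rfl fun i _ => by ring
    _ ≤ ∑ i, r * (|c i| * vol μ (A i)) := by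
        refine Finset.sum_le_sum fun i _ => ?_
        rw [mul_left_comm]
        exact mul_le_mul_of_nonneg_left (bdryW_le_mul_vol hμ (hr i)) (abs_nonneg _)

/-- Peeling off the bottom layer `m • indVec S` of a nonnegative `y` supported on `S`: no
difference `y u - y v` changes sign, so both sides of the Rayleigh quotient split additively. -/
lemma totalVar_normL1_eq_layer {y : V → ℝ} {S : Finset V} {m : ℝ} (hm : 0 ≤ m)
    (hmS : ∀ v ∈ S, m ≤ y v) (hyS : ∀ v ∉ S, y v = 0) :
    totalVar G w y = m * totalVar G w (indVec S) + totalVar G w (y - m • indVec S) ∧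
      normL1 μ y = m * vol μ S + normL1 μ (y - m • indVec S) := by
  have hy (v : V) (hv : v ∈ S) : 0 ≤ y v := hm.trans (hmS v hv)
  have hdiff (u v : V) : |y u - y v| =
      m * |indVec S u - indVec S v| + |(y - m • indVec S) u - (y - m • indVec S) v| := by
    by_cases hu : u ∈ S <;> by_cases hv : v ∈ S <;>
      simp [indVec, hu, hv, hyS, abs_of_nonneg, abs_of_nonpos, hmS, hy, sub_nonneg]
  have hval (v : V) : |y v| = m * indVec S v + |(y - m • indVec S) v| := by
    by_cases hv : v ∈ S <;> simp [indVec, hv, hyS, abs_of_nonneg, hmS, hy, sub_nonneg]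
  constructor
  · simp only [totalVar, mul_sum, ← sum_add_distrib]
    refine sum_congr rfl fun u _ => sum_congr rfl fun v _ => ?_
    split_ifs
    · rw [hdiff u v]; ring
    · simp
  · simp only [normL1, vol, hval, mul_add, sum_add_distrib, mul_sum]
    congr 1
    simp [indVec, mul_comm]

/-- A discrete coarea argument: peel off the layer of `y` at its least nonzero value, whose support
`S ⊆ U` satisfies `h * vol S ≤ bdryW S`, and induct on the size of the support. -/
lemma mul_normL1_le_half_totalVar (hμ : ∀ v, 0 < μ v) {U : Finset V} {h : ℝ}
    (hU : ∀ B ⊆ U, B.Nonempty → h ≤ phi G μ w B) {y : V → ℝ} (hy : 0 ≤ y)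
    (hyU : ∀ v ∉ U, y v = 0) : h * normL1 μ y ≤ totalVar G w y / 2 := by
  induction hn : #{v | y v ≠ 0} using Nat.strong_induction_on generalizing y with
  | _ n ih =>
  set S : Finset V := {v | y v ≠ 0}
  have hyS : ∀ v ∉ S, y v = 0 := by simp [S]
  rcases S.eq_empty_or_nonempty with hS | hS
  · obtain rfl : y = 0 := funext fun v => hyS v (by simp [hS])
    simp [normL1, totalVar]
  obtain ⟨v₀, hv₀, hmin⟩ := S.exists_min_image y hS
  set m := y v₀
  have hlayer := totalVar_normL1_eq_layer (G := G) (w := w) (μ := μ) (hy v₀) hmin hyS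
  set y' := y - m • indVec S
  have hy' : 0 ≤ y' := fun v => by
    by_cases hv : v ∈ S <;> simp [y', indVec, hv, hmin, hyS]
  have hSU : S ⊆ U := fun v hv => by_contra fun hvU => (mem_filter.1 hv).2 (hyU v hvU)
  have hsupp : #{v | y' v ≠ 0} < n := by
    refine hn ▸ card_lt_card ⟨fun v hv => ?_, fun hsub => by simpa [y', m, indVec, hv₀] using hsub hv₀⟩
    by_contra hvS
    simp [y', indVec, hvS, hyS] at hv
  have hy'U (v : V) (hvU : v ∉ U) : y' v = 0 := by
    have hvS : v ∉ S := fun hv => hvU (hSU hv)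
    simp [y', indVec, hyU v hvU, hvS]
  have ih' := ih _ hsupp hy' hy'U rfl
  have hbdry := mul_le_mul_of_nonneg_left (mul_vol_le_bdryW hμ hS (hU S hSU hS)) (hy v₀)
  rw [hlayer.1, hlayer.2, totalVar_indVec]
  linarith

lemma le_Phi1_of_forall_subset (hμ : ∀ v, 0 < μ v) (hw : ∀ e ∈ G.edgeSet, 0 ≤ w e)
    {U : Finset V} {h : ℝ} (hU : ∀ B ⊆ U, B.Nonempty → h ≤ phi G μ w B) {x : V → ℝ}
    (hxU : ∀ v ∉ U, x v = 0) (hx0 : x ≠ 0) : h ≤ Phi1 G μ w x := by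
  rw [Phi1_eq_div, le_div_iff₀ (normL1_pos hμ hx0)]
  calc h * normL1 μ x = h * normL1 μ |x| := by simp [normL1]
    _ ≤ totalVar G w |x| / 2 :=
        mul_normL1_le_half_totalVar hμ hU (fun v => abs_nonneg (x v)) fun v hv => by simp [hxU v hv]
    _ ≤ totalVar G w x / 2 := by gcongr; exact totalVar_abs_le hw x

lemma bddAbove_image_Phi1 (hμ : ∀ v, 0 < μ v) (hw : ∀ e ∈ G.edgeSet, 0 ≤ w e) :
    BddAbove (Phi1 G μ w '' {0}ᶜ) := by
  obtain ⟨r, hr⟩ := (Set.finite_range fun v => phi G μ w {v}).bddAbove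
  refine ⟨r, ?_⟩
  rintro _ ⟨x, hx, rfl⟩
  exact Phi1_le_of_mem_span hμ hw (fun u v huv => disjoint_singleton.2 huv)
    (fun v => hr ⟨v, rfl⟩) (mem_span_indVec_singleton x) hx

end Rayleigh

section Forest

open Finset SimpleGraph Function

variable {G : SimpleGraph V}

/-- `(G.induce ↑B).Preconnected`, phrased through walks of `G` itself. -/
def PreconnectedIn (G : SimpleGraph V) (B : Finset V) : Prop :=
  ∀ x ∈ B, ∀ y ∈ B, ∃ p : G.Walk x y, ∀ z ∈ p.support, z ∈ B

lemma PreconnectedIn.exists_isPath [DecidableEq V] {B : Finset V} (hB : PreconnectedIn G B)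
    {x y : V} (hx : x ∈ B) (hy : y ∈ B) : ∃ p : G.Walk x y, p.IsPath ∧ ∀ z ∈ p.support, z ∈ B := by
  obtain ⟨p, hp⟩ := hB x hx y hy
  exact ⟨p.bypass, p.bypass_isPath, fun z hz => hp z (p.support_bypass_subset_support hz)⟩

lemma PreconnectedIn.exists_adj {B : Finset V} (hB : PreconnectedIn G B) {u : V} (hu : u ∈ B)
    (hB₂ : B.Nontrivial) : ∃ z ∈ B, G.Adj u z := by
  obtain ⟨v, hv, hvu⟩ := hB₂.exists_ne u
  obtain ⟨p, hp⟩ := hB u hu v hv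
  have hnil : ¬ p.Nil := Walk.not_nil_of_ne (Ne.symm hvu)
  exact ⟨p.snd, hp _ (List.mem_of_mem_tail (p.snd_mem_tail_support hnil)), p.adj_snd hnil⟩

lemma SimpleGraph.Walk.IsPath.exists_adj_ne_of_mem_support [DecidableEq V] {x y u : V}
    {p : G.Walk x y} (hp : p.IsPath) (hu : u ∈ p.support) (hux : u ≠ x) (huy : u ≠ y) :
    ∃ a ∈ p.support, ∃ b ∈ p.support, a ≠ b ∧ G.Adj u a ∧ G.Adj u b := by
  set q := p.takeUntil u hu
  set r := p.dropUntil u hu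
  have hq : ¬ q.Nil := Walk.not_nil_of_ne hux.symm
  have hr : ¬ r.Nil := Walk.not_nil_of_ne huy
  have hnodup : (q.support ++ r.support.tail).Nodup := by
    rw [← Walk.support_append, p.take_spec hu]
    exact hp.support_nodup
  have hb := r.snd_mem_tail_support hr
  refine ⟨q.penultimate, p.support_takeUntil_subset_support hu (q.getVert_mem_support _), r.snd,
    p.support_dropUntil_subset_support hu (List.mem_of_mem_tail hb), ?_,
    (q.adj_penultimate hq).symm, r.adj_snd hr⟩
  exact (List.nodup_append.1 hnodup).2.2 _ (q.getVert_mem_support _) _ hb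

lemma PreconnectedIn.erase [DecidableEq V] {B U : Finset V} (hB : PreconnectedIn G B)
    (hBU : B ⊆ U) {u : V} (hu : ((U : Set V) ∩ G.neighborSet u).Subsingleton) :
    PreconnectedIn G (B.erase u) := by
  intro x hx y hy
  obtain ⟨p, hp, hpB⟩ := hB.exists_isPath (mem_of_mem_erase hx) (mem_of_mem_erase hy)
  refine ⟨p, fun z hz => mem_erase.2 ⟨?_, hpB z hz⟩⟩
  rintro rfl
  obtain ⟨a, ha, b, hb, hab, hza, hzb⟩ :=
    hp.exists_adj_ne_of_mem_support hz (ne_of_mem_erase hx).symm (ne_of_mem_erase hy).symm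
  exact hab (hu ⟨hBU (hpB a ha), hza⟩ ⟨hBU (hpB b hb), hzb⟩)

lemma SimpleGraph.IsAcyclic.exists_mem_subsingleton_neighbors (hG : G.IsAcyclic)
    {U : Finset V} (hU : U.Nonempty) : ∃ u ∈ U, ((U : Set V) ∩ G.neighborSet u).Subsingleton := by
  obtain ⟨u₀, hu₀⟩ := hU
  have : Nonempty (U : Set V) := ⟨⟨u₀, hu₀⟩⟩
  -- the first vertex of a longest path in `G.induce U` has no neighbour off that path
  obtain ⟨a, b, p, hp, hmax⟩ :=
    Walk.exists_isPath_forall_isPath_length_le_length (G.induce (U : Set V))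
  have hsnd (c : (U : Set V)) (hac : (G.induce (U : Set V)).Adj a c) : c = p.snd := by
    refine (hG.induce _).eq_snd_of_adj_start hp hac (by_contra fun hc => ?_)
    simpa using hmax _ _ _ (hp.cons hc (h := hac.symm))
  refine ⟨a, a.2, ?_⟩
  rintro x ⟨hx, hax⟩ y ⟨hy, hay⟩
  exact congrArg Subtype.val ((hsnd ⟨x, hx⟩ hax).trans (hsnd ⟨y, hy⟩ hay).symm)

lemma exists_preconnectedIn_component [DecidableEq V] {A : Finset V} {x : V} (hx : x ∈ A) :
    ∃ C ⊆ A, x ∈ C ∧ PreconnectedIn G C ∧ ∀ u ∈ C, ∀ v ∈ A \ C, ¬ G.Adj u v := by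
  classical
  set C : Finset V := {v ∈ A | ∃ p : G.Walk x v, ∀ z ∈ p.support, z ∈ A}
  have mem_C {v : V} {p : G.Walk x v} (hp : ∀ z ∈ p.support, z ∈ A) {z : V}
      (hz : z ∈ p.support) : z ∈ C :=
    mem_filter.2 ⟨hp z hz, p.takeUntil z hz, fun z' hz' =>
      hp z' (p.support_takeUntil_subset_support hz hz')⟩
  refine ⟨C, filter_subset _ _, mem_C (p := Walk.nil) (by simpa) (by simp), ?_, ?_⟩
  · intro u hu v hv
    obtain ⟨-, p, hp⟩ := mem_filter.1 hu
    obtain ⟨-, q, hq⟩ := mem_filter.1 hv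
    refine ⟨p.reverse.append q, fun z hz => ?_⟩
    rcases (Walk.mem_support_append_iff _ _).1 hz with hz | hz
    · exact mem_C hp (by simpa using hz)
    · exact mem_C hq hz
  · intro u hu v hv huv
    obtain ⟨-, p, hp⟩ := mem_filter.1 hu
    refine (mem_sdiff.1 hv).2 (mem_C (p := p.concat huv) (fun z hz => ?_) (p.concat huv).end_mem_support)
    simp only [Walk.support_concat, List.mem_append, List.mem_singleton] at hz
    rcases hz with hz | rfl
    exacts [hp z hz, (mem_sdiff.1 hv).1]

lemma disjoint_of_disjoint_erase [DecidableEq V] {U B₁ B₂ : Finset V} {u : V}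
    (hu : ((U : Set V) ∩ G.neighborSet u).Subsingleton) (hB₁U : B₁ ⊆ U) (hB₂U : B₂ ⊆ U)
    (hB₁ : PreconnectedIn G B₁) (hB₂ : PreconnectedIn G B₂) (hB₁u : B₁ ≠ {u}) (hB₂u : B₂ ≠ {u})
    (h : Disjoint (B₁.erase u) (B₂.erase u)) : Disjoint B₁ B₂ := by
  rw [Finset.disjoint_left] at h ⊢
  intro z hz₁ hz₂
  by_cases hzu : z = u
  · subst hzu
    obtain ⟨a, ha, hza⟩ := hB₁.exists_adj hz₁ ((nontrivial_iff_ne_singleton hz₁).2 hB₁u)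
    obtain ⟨b, hb, hzb⟩ := hB₂.exists_adj hz₂ ((nontrivial_iff_ne_singleton hz₂).2 hB₂u)
    obtain rfl : a = b := hu ⟨hB₁U ha, hza⟩ ⟨hB₂U hb, hzb⟩
    exact h (mem_erase.2 ⟨hza.ne', ha⟩) (mem_erase.2 ⟨hza.ne', hb⟩)
  · exact h (mem_erase.2 ⟨hzu, hz₁⟩) (mem_erase.2 ⟨hzu, hz₂⟩)

lemma pairwise_disjoint_on_cons {α : Type*} {k : ℕ} {A : Finset α} {Bs : Fin k → Finset α}
    (hA : ∀ i, Disjoint A (Bs i)) (hBs : Pairwise (Disjoint on Bs)) :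
    Pairwise (Disjoint on (Fin.cons A Bs : Fin (k + 1) → Finset α)) := by
  intro i j hij
  induction i using Fin.cases <;> induction j using Fin.cases
  · exact absurd rfl hij
  · simpa [onFun] using hA _
  · simpa [onFun] using (hA _).symm
  · simpa [onFun] using hBs fun h => hij (congrArg Fin.succ h)

/-- Packing–covering duality for subtrees of a forest. Induct on `U` by removing a leaf `u`:
either `{u} ∈ F` and `u` joins the hitting set, or `u` is deleted from every member. -/
lemma SimpleGraph.IsAcyclic.exists_hittingSet_card_lt [DecidableEq V] (hG : G.IsAcyclic)
    (U : Finset V) (k : ℕ) (F : Set (Finset V))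
    (hF : ∀ B ∈ F, B.Nonempty ∧ PreconnectedIn G B ∧ B ⊆ U)
    (hpack : ¬ ∃ Bs : Fin k → Finset V, (∀ i, Bs i ∈ F) ∧ Pairwise (Disjoint on Bs)) :
    ∃ D : Finset V, #D < k ∧ ∀ B ∈ F, ∃ v ∈ D, v ∈ B := by
  induction U using Finset.strongInduction generalizing k F with
  | H U ih =>
  obtain _ | k := k
  · exact absurd ⟨Fin.elim0, fun i => i.elim0, fun i => i.elim0⟩ hpack
  rcases F.eq_empty_or_nonempty with rfl | ⟨B₀, hB₀⟩
  · exact ⟨∅, by simp, by simp⟩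
  obtain ⟨u, huU, hu⟩ := hG.exists_mem_subsingleton_neighbors ((hF B₀ hB₀).1.mono (hF B₀ hB₀).2.2)
  have hU' : U.erase u ⊂ U := erase_ssubset huU
  by_cases hsing : {u} ∈ F
  · obtain ⟨D, hD, hDF⟩ := ih _ hU' k {B ∈ F | u ∉ B}
      (fun B ⟨hB, huB⟩ => ⟨(hF B hB).1, (hF B hB).2.1,
        fun z hz => mem_erase.2 ⟨fun h => huB (h ▸ hz), (hF B hB).2.2 hz⟩⟩)
      (fun ⟨Bs, hBs, hdisj⟩ => hpack ⟨Fin.cons {u} Bs, Fin.cases hsing fun i => (hBs i).1,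
        pairwise_disjoint_on_cons (fun i => disjoint_singleton_left.2 (hBs i).2) hdisj⟩)
    refine ⟨insert u D, (card_insert_le u D).trans_lt (by omega), fun B hB => ?_⟩
    by_cases huB : u ∈ B
    · exact ⟨u, mem_insert_self u D, huB⟩
    · obtain ⟨v, hvD, hvB⟩ := hDF B ⟨hB, huB⟩
      exact ⟨v, mem_insert_of_mem hvD, hvB⟩
  · have hne (B : Finset V) (hB : B ∈ F) : B ≠ {u} := fun h => hsing (h ▸ hB)
    obtain ⟨D, hD, hDF⟩ := ih _ hU' (k + 1) ((·.erase u) '' F)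
      (by
        rintro _ ⟨B, hB, rfl⟩
        obtain ⟨hB₁, hB₂, hBU⟩ := hF B hB
        refine ⟨?_, hB₂.erase hBU hu, erase_subset_erase u hBU⟩
        by_cases huB : u ∈ B
        · exact (erase_nonempty huB).2 ((nontrivial_iff_ne_singleton huB).2 (hne B hB))
        · simpa [erase_eq_of_notMem huB] using hB₁)
      (by
        rintro ⟨Bs, hBs, hdisj⟩
        choose C hCF hCBs using hBs
        refine hpack ⟨C, hCF, fun i j hij => ?_⟩
        exact disjoint_of_disjoint_erase hu (hF _ (hCF i)).2.2 (hF _ (hCF j)).2.2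
          (hF _ (hCF i)).2.1 (hF _ (hCF j)).2.1 (hne _ (hCF i)) (hne _ (hCF j))
          (by simpa only [onFun, ← hCBs] using hdisj hij))
    refine ⟨D, hD, fun B hB => ?_⟩
    obtain ⟨v, hvD, hvB⟩ := hDF _ ⟨B, hB, rfl⟩
    exact ⟨v, hvD, mem_of_mem_erase hvB⟩

variable [Fintype V] [DecidableEq V] [DecidableRel G.Adj] {μ : V → ℝ} {w : Sym2 V → ℝ}

lemma exists_preconnectedIn_subset_phi_le (hμ : ∀ v, 0 < μ v) {A : Finset V} (hA : A.Nonempty) :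
    ∃ C ⊆ A, C.Nonempty ∧ PreconnectedIn G C ∧ phi G μ w C ≤ phi G μ w A := by
  induction A using Finset.strongInduction with
  | H A ih =>
  obtain ⟨x, hx⟩ := hA
  obtain ⟨C, hCA, hxC, hC, hno⟩ := exists_preconnectedIn_component (G := G) hx
  rcases (A \ C).eq_empty_or_nonempty with hD | hD
  · obtain rfl : C = A := subset_antisymm hCA (sdiff_eq_empty_iff_subset.1 hD)
    exact ⟨C, subset_rfl, ⟨x, hxC⟩, hC, le_rfl⟩
  have hA : C ∪ A \ C = A := union_sdiff_of_subset hCA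
  rcases phi_le_or_phi_le_of_union (G := G) (w := w) hμ disjoint_sdiff ⟨x, hxC⟩ hD hno with h | h
    <;> rw [hA] at h
  · exact ⟨C, hCA, ⟨x, hxC⟩, hC, h⟩
  · obtain ⟨C', hC'D, hC', hC'conn, hC'le⟩ := ih (A \ C) (sdiff_ssubset hCA ⟨x, hxC⟩) hD
    exact ⟨C', hC'D.trans sdiff_subset, hC', hC'conn, hC'le.trans h⟩

lemma exists_card_eq_forall_subset_le_phi (hG : G.IsAcyclic) (hμ : ∀ v, 0 < μ v) {k : ℕ}
    (hkn : k ≤ Fintype.card V) {h : ℝ}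
    (hh : ∀ A : Fin k → Finset V, IsSubpartition A → ∃ i, h ≤ phi G μ w (A i)) :
    ∃ U : Finset V, #U = Fintype.card V - k + 1 ∧ ∀ B ⊆ U, B.Nonempty → h ≤ phi G μ w B := by
  obtain ⟨D, hD, hDF⟩ := hG.exists_hittingSet_card_lt univ k
    {B | B.Nonempty ∧ PreconnectedIn G B ∧ phi G μ w B < h}
    (fun B hB => ⟨hB.1, hB.2.1, subset_univ B⟩)
    (fun ⟨Bs, hBs, hdisj⟩ => by
      obtain ⟨i, hi⟩ := hh Bs ⟨fun i => (hBs i).1, hdisj⟩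
      exact (hBs i).2.2.not_ge hi)
  obtain ⟨U, hUD, hU⟩ := exists_subset_card_eq (s := Dᶜ) (n := Fintype.card V - k + 1)
    (by rw [card_compl]; omega)
  refine ⟨U, hU, fun B hBU hB => ?_⟩
  by_contra! hlt
  obtain ⟨C, hCB, hC, hCconn, hCle⟩ := exists_preconnectedIn_subset_phi_le (G := G) (w := w) hμ hB
  obtain ⟨v, hvD, hvC⟩ := hDF C ⟨hC, hCconn, hCle.trans_lt hlt⟩
  exact mem_compl.1 (hUD (hBU (hCB hvC))) hvD

end Forest

section Cheeger

open Finset Function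

variable [Fintype V] [DecidableEq V] {G : SimpleGraph V} [DecidableRel G.Adj]
  {μ : V → ℝ} {w : Sym2 V → ℝ}

lemma finite_setOf_isSubpartition_sSup (k : ℕ) :
    {r | ∃ A : Fin k → Finset V, IsSubpartition A ∧
      r = sSup {s | ∃ i, s = phi G μ w (A i)}}.Finite :=
  (Set.finite_range fun A : Fin k → Finset V => sSup {s | ∃ i, s = phi G μ w (A i)}).subset <| by
    rintro _ ⟨A, -, rfl⟩
    exact ⟨A, rfl⟩

lemma setOf_exists_eq_eq_range {ι α : Type*} (f : ι → α) : {s | ∃ i, s = f i} = Set.range f := by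
  ext
  simp [eq_comm]

lemma exists_isSubpartition_forall_phi_le_hkConst {k : ℕ} (hkn : k ≤ Fintype.card V) :
    ∃ A : Fin k → Finset V, IsSubpartition A ∧ ∀ i, phi G μ w (A i) ≤ hkConst G μ w k := by
  obtain ⟨e⟩ : Nonempty (Fin k ↪ V) := Embedding.nonempty_of_card_le (by simpa using hkn)
  obtain ⟨A, hA, hAh⟩ := Set.Nonempty.csInf_mem
    (s := {r | ∃ A : Fin k → Finset V, IsSubpartition A ∧
      r = sSup {s | ∃ i, s = phi G μ w (A i)}})
    ⟨_, fun i => {e i}, ⟨fun i => singleton_nonempty _,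
      fun i j hij => disjoint_singleton.2 (e.injective.ne hij)⟩, rfl⟩
    (finite_setOf_isSubpartition_sSup k)
  refine ⟨A, hA, fun i => ?_⟩
  rw [hkConst, hAh, setOf_exists_eq_eq_range]
  exact le_csSup (Set.finite_range _).bddAbove ⟨i, rfl⟩

lemma exists_hkConst_le_phi {k : ℕ} (hk : 0 < k) {A : Fin k → Finset V} (hA : IsSubpartition A) :
    ∃ i, hkConst G μ w k ≤ phi G μ w (A i) := by
  have : Nonempty (Fin k) := ⟨⟨0, hk⟩⟩
  obtain ⟨i, hi⟩ := (Set.range_nonempty fun i => phi G μ w (A i)).csSup_mem (Set.finite_range _)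
  refine ⟨i, (csInf_le (finite_setOf_isSubpartition_sSup k).bddBelow ⟨A, hA, rfl⟩).trans ?_⟩
  rw [setOf_exists_eq_eq_range, ← hi]

end Cheeger

theorem forest_nonlinear_courant_fischer [Fintype V] [DecidableEq V]
    (G : SimpleGraph V) [DecidableRel G.Adj] (hG : G.IsAcyclic)
    (μ : V → ℝ) (w : Sym2 V → ℝ) (hμ : ∀ v, 0 < μ v) (hw : ∀ e ∈ G.edgeSet, 0 < w e)
    (k : ℕ) (hk : 1 ≤ k) (hkn : k ≤ Fintype.card V) :
    sInf {r | ∃ X : Submodule ℝ (V → ℝ), Module.finrank ℝ X = k ∧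
        r = sSup {s | ∃ x : V → ℝ, x ∈ X ∧ x ≠ 0 ∧ s = Phi1 G μ w x}} = hkConst G μ w k ∧
      sSup {r | ∃ X : Submodule ℝ (V → ℝ), Module.finrank ℝ X = Fintype.card V - k + 1 ∧
        r = sInf {s | ∃ x : V → ℝ, x ∈ X ∧ x ≠ 0 ∧ s = Phi1 G μ w x}} = hkConst G μ w k := by
  have hw₀ : ∀ e ∈ G.edgeSet, 0 ≤ w e := fun e he => (hw e he).le
  obtain ⟨A, hA, hAh⟩ := exists_isSubpartition_forall_phi_le_hkConst (G := G) (μ := μ) (w := w) hkn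
  obtain ⟨U, hU, hUh⟩ :=
    exists_card_eq_forall_subset_le_phi hG hμ hkn fun B hB => exists_hkConst_le_phi hk hB
  set X := Submodule.span ℝ (Set.range fun i => indVec (A i))
  set Y := Submodule.span ℝ (Set.range fun a : U => indVec {a.1})
  have hX : Module.finrank ℝ X = k := by rw [finrank_span_indVec hA.1 hA.2, Fintype.card_fin]
  have hY : Module.finrank ℝ Y = Fintype.card V - k + 1 := by
    rw [finrank_span_indVec (fun _ => Finset.singleton_nonempty _)
      fun a b hab => Finset.disjoint_singleton.2 (Subtype.coe_ne_coe.2 hab), Fintype.card_coe, hU]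
  have hdim : Module.finrank ℝ (V → ℝ) < k + (Fintype.card V - k + 1) := by
    rw [Module.finrank_fintype_fun_eq_card]
    omega
  have hXh (x) (hx : x ∈ X) (hx0 : x ≠ 0) : Phi1 G μ w x ≤ hkConst G μ w k :=
    Phi1_le_of_mem_span hμ hw₀ hA.2 hAh hx hx0
  have hYh (y) (hy : y ∈ Y) (hy0 : y ≠ 0) : hkConst G μ w k ≤ Phi1 G μ w y :=
    le_Phi1_of_forall_subset hμ hw₀ hUh (fun v hv => eq_zero_of_mem_span_indVec hy fun a => by
      simpa using (ne_of_mem_of_not_mem a.2 hv).symm) hy0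
  exact ⟨sInf_sSup_eq_of_subspaces (bddAbove_image_Phi1 hμ hw₀) hk hdim hX hY hXh hYh,
    sSup_sInf_eq_of_subspaces ⟨0, by rintro _ ⟨x, -, rfl⟩; exact Phi1_nonneg hμ hw₀ x⟩
      (Nat.succ_pos _) hdim hX hY hXh hYh⟩
end
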